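/- arXiv:1812.00047 — 6 statements merged into one kernel-verified Lean document; each statement's English description precedes it below -/
import Mathlib

section
/- Let m ≥ n ≥ 0 be integers. Then in the field ℚ(X_1,…,X_m,X_1^*,…,X_n^*) one has the identity P_{m,n} = (1/(n!·(m−n)!)) · Σ_{w ∈ W} w·S_{m,n}, where the sum runs over all w in W = 𝔖_m × 𝔖_n and n!·(m−n)! is the order of the subgroup W' of pairs (σ,τ) ∈ 𝔖_m × 𝔖_n with σ(i) = τ(i) for all 1 ≤ i ≤ n. -/
/-
Let `M` be the `m × m` Cauchy–Vandermonde matrix whose first `n` columns are `(X_i + X_k^*)⁻¹`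
and whose remaining columns are `X_i ^ 0, …, X_i ^ (m - n - 1)`. Scaling each row by
`X_i + X_n^*` and clearing the last Cauchy column reduces `n` by one, so by induction
`det M · ∏_{i,k} (X_i + X_k^*) = Δ(X) Δ(X^*)`, the product of the two Vandermonde determinants.

In `S_{m,n}` the factors `∏_{j<k}` are alternating, so `(σ, τ)·S_{m,n}` is `sign σ · sign τ` times a
fixed product, times the Vandermonde determinant of the rows `σ(n+1), …, σ(m)`, over
`∏_k (X_{σ k} + X_{τ k}^*)`. Summing over `τ` gives the Cauchy minor of `M` in the rows
`σ(1), …, σ(n)`, and `∑_σ sign σ · (top minor) · (bottom minor) = n! (m - n)! det M`, because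
every Leibniz term of `det M` arises once for each pair of permutations of the two blocks.
The fixed product times `Δ(X) Δ(X^*)` is the numerator of `P_{m,n}`, which gives the identity.
-/

open MvPolynomial Equiv Finset

noncomputable section

namespace Stmt0

variable (m n : ℕ)

/-- The field `ℚ(X_1,…,X_m,X_1^*,…,X_n^*)` of rational functions:
the `X_j` correspond to `Sum.inl j`, the `X_k^*` to `Sum.inr k`. -/
abbrev RF : Type := FractionRing (MvPolynomial (Fin m ⊕ Fin n) ℚ)

/-- The canonical map from polynomials to rational functions. -/
def toRF : MvPolynomial (Fin m ⊕ Fin n) ℚ →+* RF m n := algebraMap _ _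

/-- The variable `X_j`, `1 ≤ j ≤ m`. -/
def Xl (j : Fin m) : MvPolynomial (Fin m ⊕ Fin n) ℚ := X (Sum.inl j)

/-- The variable `X_k^*`, `1 ≤ k ≤ n`. -/
def Xr (k : Fin n) : MvPolynomial (Fin m ⊕ Fin n) ℚ := X (Sum.inr k)

/-- Numerator of `P_{m,n}`:
`∏_{1≤j≠k≤m}(X_j−X_k) · ∏_{1≤j≠k≤n}(X_j^*−X_k^*)`. -/
def Pnum : MvPolynomial (Fin m ⊕ Fin n) ℚ :=
  (∏ pr ∈ (univ : Finset (Fin m)).offDiag, (Xl m n pr.1 - Xl m n pr.2)) *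
    ∏ pr ∈ (univ : Finset (Fin n)).offDiag, (Xr m n pr.1 - Xr m n pr.2)

/-- Denominator of `P_{m,n}`: `∏_{1≤j≤m, 1≤k≤n}(X_j+X_k^*)`. -/
def Pden : MvPolynomial (Fin m ⊕ Fin n) ℚ :=
  ∏ j : Fin m, ∏ k : Fin n, (Xl m n j + Xr m n k)

/-- Numerator of `S_{m,n}`:
`∏_{1≤j<k≤n}(X_j^*−X_k^*) · ∏_{1≤j<k≤m}(X_j−X_k) · ∏_{n+1≤k<j≤m}(X_j−X_k)`. -/
def Snum : MvPolynomial (Fin m ⊕ Fin n) ℚ :=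
  (∏ pr ∈ Finset.filter (fun pr : Fin n × Fin n => pr.1 < pr.2) univ,
      (Xr m n pr.1 - Xr m n pr.2)) *
    (∏ pr ∈ Finset.filter (fun pr : Fin m × Fin m => pr.1 < pr.2) univ,
      (Xl m n pr.1 - Xl m n pr.2)) *
    ∏ pr ∈ Finset.filter (fun pr : Fin m × Fin m => n ≤ (pr.2 : ℕ) ∧ pr.2 < pr.1) univ,
      (Xl m n pr.1 - Xl m n pr.2)

/-- Denominator of `S_{m,n}`: `∏_{1≤k≤n}(X_k+X_k^*)`. -/
def Sden (hmn : n ≤ m) : MvPolynomial (Fin m ⊕ Fin n) ℚ :=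
  ∏ k : Fin n, (Xl m n (Fin.castLE hmn k) + Xr m n k)

section PairProducts
variable {M : Type*} [CommMonoid M]

theorem prod_filter_lt_eq_prod_Ioi {α : Type*} [Fintype α] [LinearOrder α]
    [LocallyFiniteOrderTop α] (f : α → α → M) :
    ∏ p : α × α with p.1 < p.2, f p.1 p.2 = ∏ i, ∏ j ∈ Ioi i, f i j :=
  prod_finset_product' _ _ _ (by simp)

theorem prod_offDiag_eq_prod_filter_lt {α : Type*} [Fintype α] [LinearOrder α]
    (f : α → α → M) :
    ∏ p ∈ (univ : Finset α).offDiag, f p.1 p.2 =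
      ∏ p : α × α with p.1 < p.2, f p.1 p.2 * f p.2 p.1 := by
  rw [prod_mul_distrib, ← prod_filter_mul_prod_filter_not _ (fun p : α × α => p.1 < p.2)]
  congr 1
  · congr 1; ext p; simpa using ne_of_lt
  · refine prod_nbij' Prod.swap Prod.swap ?_ ?_ ?_ ?_ ?_ <;>
      simp +contextual [lt_iff_le_and_ne, ne_comm]

theorem Fin.prod_Ioi_eq_prod_castSucc_mul {n : ℕ} (g : Fin (n + 1) → Fin (n + 1) → M) :
    ∏ i, ∏ j ∈ Ioi i, g i j =
      (∏ i : Fin n, ∏ j ∈ Ioi i, g i.castSucc j.castSucc) *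
        ∏ i : Fin n, g i.castSucc (Fin.last n) := by
  simp [← Finset.filter_lt_eq_Ioi, Finset.prod_filter, Fin.prod_univ_castSucc, prod_mul_distrib,
    not_lt.2 (Fin.le_last _)]

theorem prod_filter_le_snd_lt_fst_eq_prod_natAdd {n k : ℕ} (f : Fin (n + k) → Fin (n + k) → M) :
    ∏ p : Fin (n + k) × Fin (n + k) with n ≤ (p.2 : ℕ) ∧ p.2 < p.1, f p.1 p.2 =
      ∏ p : Fin k × Fin k with p.1 < p.2, f (Fin.natAdd n p.2) (Fin.natAdd n p.1) := by
  symm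
  refine prod_bij (fun p _ => (Fin.natAdd n p.2, Fin.natAdd n p.1)) ?_ ?_ ?_ ?_
  · simp
  · simp +contextual [Prod.ext_iff]
  · rintro ⟨a, b⟩ h
    simp only [mem_filter, mem_univ, true_and] at h
    obtain ⟨b', rfl⟩ : b ∈ Set.range (Fin.natAdd n) := by simpa [Fin.range_natAdd] using h.1
    obtain ⟨a', rfl⟩ : a ∈ Set.range (Fin.natAdd n) := by
      simpa [Fin.range_natAdd] using h.1.trans h.2.le
    exact ⟨(b', a'), by simpa using h.2, rfl⟩
  · simp

end PairProducts

section Vandermonde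
open Matrix
variable {R : Type*} [CommRing R] {k : ℕ}

theorem det_vandermonde_eq_prod_filter_lt (v : Fin k → R) :
    det (vandermonde v) = ∏ p : Fin k × Fin k with p.1 < p.2, (v p.2 - v p.1) := by
  rw [det_vandermonde, prod_filter_lt_eq_prod_Ioi fun i j => v j - v i]

theorem det_vandermonde_neg (v : Fin k → R) :
    det (vandermonde (-v)) = ∏ p : Fin k × Fin k with p.1 < p.2, (v p.1 - v p.2) := by
  rw [det_vandermonde_eq_prod_filter_lt]
  exact prod_congr rfl fun _ _ => by simp [sub_eq_add_neg, add_comm]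

theorem det_vandermonde_comp_perm (v : Fin k → R) (τ : Perm (Fin k)) :
    det (vandermonde (v ∘ τ)) = Perm.sign τ * det (vandermonde v) := by
  rw [← det_permute]
  rfl

theorem det_vandermonde_eq_mul_prod_last (v : Fin (k + 1) → R) :
    det (vandermonde v) =
      det (vandermonde (fun i : Fin k => v i.castSucc)) *
        ∏ i : Fin k, (v (Fin.last k) - v i.castSucc) := by
  rw [det_vandermonde, det_vandermonde, Fin.prod_Ioi_eq_prod_castSucc_mul]

theorem prod_filter_lt_sub_comp_perm {R : Type*} [CommRing R] {k : ℕ} (v : Fin k → R)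
    (τ : Perm (Fin k)) :
    ∏ p : Fin k × Fin k with p.1 < p.2, (v (τ p.1) - v (τ p.2)) =
      Perm.sign τ * ∏ p : Fin k × Fin k with p.1 < p.2, (v p.1 - v p.2) := by
  rw [← det_vandermonde_neg (fun i => v (τ i)), ← det_vandermonde_neg v,
    ← det_vandermonde_comp_perm]
  rfl

end Vandermonde

section CauchyVandermonde
open Matrix
variable {F : Type*} [Field F] {m : ℕ}

def cauchyVandermonde (n : ℕ) (x : Fin m → F) (y : Fin n → F) : Matrix (Fin m) (Fin m) F :=
  of fun i j => if h : (j : ℕ) < n then (x i + y ⟨j, h⟩)⁻¹ else x i ^ ((j : ℕ) - n)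

theorem cauchyVandermonde_of_lt {n : ℕ} (x : Fin m → F) (y : Fin n → F) (i : Fin m) {j : Fin m}
    (hj : (j : ℕ) < n) : cauchyVandermonde n x y i j = (x i + y ⟨j, hj⟩)⁻¹ := by
  simp [cauchyVandermonde, hj]

theorem cauchyVandermonde_of_le {n : ℕ} (x : Fin m → F) (y : Fin n → F) (i : Fin m) {j : Fin m}
    (hj : n ≤ (j : ℕ)) : cauchyVandermonde n x y i j = x i ^ ((j : ℕ) - n) := by
  simp [cauchyVandermonde, hj.not_gt]

theorem Fin.prod_dite_val_lt {M : Type*} [CommMonoid M] {n : ℕ} (hnm : n ≤ m) (f : Fin n → M) :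
    ∏ j : Fin m, (if h : (j : ℕ) < n then f ⟨j, h⟩ else 1) = ∏ k, f k := by
  obtain ⟨k, rfl⟩ := Nat.exists_eq_add_of_le hnm
  simp [Fin.prod_univ_add]

/-- The Cauchy–Vandermonde matrix of `y : Fin (n + 1) → F` after scaling row `i` by
`x i + y (last n)` and subtracting column `n` from the other Cauchy columns. -/
def cauchyVandermondeStep {n : ℕ} (x : Fin m → F) (y : Fin (n + 1) → F) :
    Matrix (Fin m) (Fin m) F :=
  of fun i j => if h : (j : ℕ) < n
    then (y (Fin.last n) - y ⟨j, by omega⟩) * (x i + y ⟨j, by omega⟩)⁻¹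
    else (x i + y (Fin.last n)) * cauchyVandermonde (n + 1) x y i j

theorem cauchyVandermondeStep_of_val_eq {n : ℕ} (x : Fin m → F) (y : Fin (n + 1) → F)
    (hxy : ∀ i j, x i + y j ≠ 0) (i : Fin m) {j : Fin m} (hj : (j : ℕ) = n) :
    cauchyVandermondeStep x y i j = 1 := by
  simp only [cauchyVandermondeStep, of_apply, hj, lt_irrefl, dif_neg, not_false_eq_true,
    cauchyVandermonde_of_lt x y i (j := j) (by omega)]
  exact mul_inv_cancel₀ (hxy i _)

theorem prod_mul_det_cauchyVandermonde_succ {n : ℕ} (hnm : n + 1 ≤ m) (x : Fin m → F)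
    (y : Fin (n + 1) → F) (hxy : ∀ i j, x i + y j ≠ 0) :
    (∏ i, (x i + y (Fin.last n))) * det (cauchyVandermonde (n + 1) x y) =
      det (cauchyVandermondeStep x y) := by
  let jn : Fin m := ⟨n, by omega⟩
  rw [← det_mul_column, ← det_transpose, ← det_transpose (cauchyVandermondeStep x y)]
  refine det_eq_of_forall_row_eq_smul_add_const (fun j => if (j : ℕ) < n then 1 else 0) jn
    (by simp [jn]) fun j i => ?_
  simp only [transpose_apply, of_apply, cauchyVandermondeStep_of_val_eq x y hxy i (j := jn) rfl,
    mul_one]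
  by_cases hj : (j : ℕ) < n
  · have hxyj : x i + y ⟨j, by omega⟩ ≠ 0 := hxy i _
    simp only [cauchyVandermondeStep, of_apply, hj, if_true, dif_pos,
      cauchyVandermonde_of_lt x y i (hj.trans (Nat.lt_succ_self n))]
    field_simp
    ring
  · simp [cauchyVandermondeStep, hj]

theorem det_cauchyVandermondeStep {n : ℕ} (hnm : n + 1 ≤ m) (x : Fin m → F)
    (y : Fin (n + 1) → F) (hxy : ∀ i j, x i + y j ≠ 0) :
    det (cauchyVandermondeStep x y) =
      (∏ k : Fin n, (y (Fin.last n) - y k.castSucc)) *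
        det (cauchyVandermonde n x (fun k => y k.castSucc)) := by
  obtain ⟨r, rfl⟩ : ∃ r, m = r + 1 := ⟨m - 1, by omega⟩
  set c := y (Fin.last n)
  set y' : Fin n → F := fun k => y k.castSucc
  have hstep_n := cauchyVandermondeStep_of_val_eq x y hxy
  rw [← Fin.prod_dite_val_lt (m := r + 1) (n := n) (by omega) (fun k => c - y' k), ← det_mul_row]
  symm
  refine det_eq_of_forall_col_eq_smul_add_pred
    (fun j : Fin r => if n ≤ (j : ℕ) then -c else 0) ?_ ?_
  · intro i
    rcases Nat.eq_zero_or_pos n with hn | hn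
    · simp [hstep_n i (j := 0) (by simp [hn]), hn, cauchyVandermonde_of_le]
    · simp [cauchyVandermondeStep, hn]
      rw [cauchyVandermonde_of_lt x y' i (j := 0) hn]
      rfl
  · intro i j
    rcases lt_trichotomy ((j : ℕ) + 1) n with hlt | heq | hgt
    · simp [cauchyVandermondeStep, cauchyVandermonde_of_lt, hlt, show ¬ n ≤ (j : ℕ) by omega]
      rfl
    · simp [hstep_n i (j := j.succ) (by simp [heq]), cauchyVandermonde_of_le, ← heq]
    · have hnj : n ≤ (j : ℕ) := by omega
      simp only [cauchyVandermondeStep, of_apply, Fin.val_succ, Fin.val_castSucc,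
        show ¬ (j : ℕ) < n by omega, show ¬ (j : ℕ) + 1 < n by omega, hnj, if_true, dif_neg,
        not_false_eq_true, one_mul,
        cauchyVandermonde_of_le x y' i (j := j.succ) (by simp; omega),
        cauchyVandermonde_of_le x y i (j := j.succ) (by simp; omega),
        cauchyVandermonde_of_le x y' i (j := j.castSucc) (by simp; omega)]
      rw [show (j : ℕ) + 1 - n = (j - n) + 1 by omega, show (j : ℕ) + 1 - (n + 1) = j - n by omega]
      ring

theorem det_cauchyVandermonde_mul_prod {n : ℕ} (hnm : n ≤ m) (x : Fin m → F) (y : Fin n → F)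
    (hxy : ∀ i j, x i + y j ≠ 0) :
    det (cauchyVandermonde n x y) * ∏ i, ∏ j, (x i + y j) =
      det (vandermonde x) * det (vandermonde y) := by
  induction n with
  | zero =>
    have hV : cauchyVandermonde 0 x y = vandermonde x := by
      ext i j
      simp [cauchyVandermonde, vandermonde_apply]
    simp [hV]
  | succ n ih =>
    have hsplit : ∏ i, ∏ j, (x i + y j) =
        (∏ i, ∏ j : Fin n, (x i + y j.castSucc)) * ∏ i, (x i + y (Fin.last n)) := by
      simp only [Fin.prod_univ_castSucc, prod_mul_distrib]
    rw [hsplit, det_vandermonde_eq_mul_prod_last y]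
    linear_combination (∏ i : Fin m, ∏ j : Fin n, (x i + y j.castSucc)) *
        (prod_mul_det_cauchyVandermonde_succ hnm x y hxy).trans
          (det_cauchyVandermondeStep hnm x y hxy) +
      (∏ k : Fin n, (y (Fin.last n) - y k.castSucc)) * ih (by omega) _ fun i j => hxy i _

end CauchyVandermonde

section BlockExpansion
open Matrix
variable {R : Type*} [CommRing R]

theorem sum_sign_mul_det_inl_mul_det_inr {α β : Type*} [Fintype α] [DecidableEq α] [Fintype β]
    [DecidableEq β] (M : Matrix (α ⊕ β) (α ⊕ β) R) :
    ∑ σ : Perm (α ⊕ β), (Perm.sign σ : R) *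
        (det (of fun a a' : α => M (σ (.inl a)) (.inl a')) *
          det (of fun b b' : β => M (σ (.inr b)) (.inr b'))) =
      (Fintype.card (Perm α) * Fintype.card (Perm β) : ℕ) * det M := by
  let term : Perm (α ⊕ β) → R := fun σ => Perm.sign σ * ∏ j, M (σ j) j
  have hexpand : ∀ σ : Perm (α ⊕ β), (Perm.sign σ : R) *
      (det (of fun a a' : α => M (σ (.inl a)) (.inl a')) *
        det (of fun b b' : β => M (σ (.inr b)) (.inr b'))) =
      ∑ π₁ : Perm α, ∑ π₂ : Perm β, term (σ * sumCongr π₁ π₂) := by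
    intro σ
    rw [det_apply', det_apply', sum_mul_sum, mul_sum]
    refine sum_congr rfl fun π₁ _ => ?_
    rw [mul_sum]
    refine sum_congr rfl fun π₂ _ => ?_
    simp only [term, map_mul, Perm.sign_sumCongr, Fintype.prod_sum_type, Perm.mul_apply,
      sumCongr_apply, Sum.map_inl, Sum.map_inr, of_apply]
    push_cast
    ring
  have hshift : ∀ π : Perm (α ⊕ β), ∑ σ, term (σ * π) = det M := fun π =>
    (Equiv.sum_comp (Equiv.mulRight π) term).trans (det_apply' M).symm
  rw [sum_congr rfl fun σ _ => hexpand σ, sum_comm]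
  simp only [sum_comm (γ := Perm (α ⊕ β)), hshift, sum_const, card_univ, nsmul_eq_mul]
  push_cast
  ring

theorem sum_sign_mul_det_castAdd_mul_det_natAdd {n k : ℕ}
    (M : Matrix (Fin (n + k)) (Fin (n + k)) R) :
    ∑ σ : Perm (Fin (n + k)), (Perm.sign σ : R) *
        (det (of fun a a' : Fin n => M (σ (Fin.castAdd k a)) (Fin.castAdd k a')) *
          det (of fun b b' : Fin k => M (σ (Fin.natAdd n b)) (Fin.natAdd n b'))) =
      (n.factorial * k.factorial : ℕ) * det M := by
  let e : Fin n ⊕ Fin k ≃ Fin (n + k) := finSumFinEquiv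
  have h := sum_sign_mul_det_inl_mul_det_inr (M.submatrix e e)
  rw [det_submatrix_equiv_self, Fintype.card_perm, Fintype.card_perm, Fintype.card_fin,
    Fintype.card_fin] at h
  rw [← h, ← e.permCongr.sum_comp]
  simp [e, Perm.sign_permCongr, permCongr_apply]

end BlockExpansion

section Symmetrization
open Matrix

theorem sum_perm_S_eq_factorial_mul_P {F : Type*} [Field F] {n k : ℕ} (x : Fin (n + k) → F)
    (y : Fin n → F) (hxy : ∀ i j, x i + y j ≠ 0) :
    ∑ w : Perm (Fin (n + k)) × Perm (Fin n),
      (∏ p : Fin n × Fin n with p.1 < p.2, (y (w.2 p.1) - y (w.2 p.2))) *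
          (∏ p : Fin (n + k) × Fin (n + k) with p.1 < p.2, (x (w.1 p.1) - x (w.1 p.2))) *
          (∏ p : Fin (n + k) × Fin (n + k) with n ≤ (p.2 : ℕ) ∧ p.2 < p.1,
            (x (w.1 p.1) - x (w.1 p.2))) /
        ∏ a : Fin n, (x (w.1 (Fin.castAdd k a)) + y (w.2 a)) =
      (n.factorial * k.factorial : ℕ) *
        ((∏ p ∈ (univ : Finset (Fin (n + k))).offDiag, (x p.1 - x p.2)) *
            (∏ p ∈ (univ : Finset (Fin n)).offDiag, (y p.1 - y p.2)) /
          ∏ i, ∏ j, (x i + y j)) := by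
  set M := cauchyVandermonde n x y
  have htop : ∀ σ : Perm (Fin (n + k)),
      ∑ τ : Perm (Fin n), (Perm.sign τ : F) * ∏ a, (x (σ (Fin.castAdd k a)) + y (τ a))⁻¹ =
        det (of fun a a' : Fin n => M (σ (Fin.castAdd k a)) (Fin.castAdd k a')) := by
    intro σ
    rw [← det_transpose, det_apply']
    simp [M, cauchyVandermonde_of_lt]
  have hbot : ∀ σ : Perm (Fin (n + k)),
      ∏ p : Fin (n + k) × Fin (n + k) with n ≤ (p.2 : ℕ) ∧ p.2 < p.1, (x (σ p.1) - x (σ p.2)) =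
        det (of fun b b' : Fin k => M (σ (Fin.natAdd n b)) (Fin.natAdd n b')) := by
    intro σ
    rw [prod_filter_le_snd_lt_fst_eq_prod_natAdd (fun a b => x (σ a) - x (σ b)),
      ← det_vandermonde_eq_prod_filter_lt (fun b => x (σ (Fin.natAdd n b)))]
    congr 1
    ext b b'
    simp [M, cauchyVandermonde_of_le, vandermonde_apply]
  have hM : det M = det (vandermonde x) * det (vandermonde y) / ∏ i, ∏ j, (x i + y j) := by
    rw [eq_div_iff (prod_ne_zero_iff.2 fun i _ => prod_ne_zero_iff.2 fun j _ => hxy i j)]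
    exact det_cauchyVandermonde_mul_prod (by omega) x y hxy
  calc _ = (∏ p : Fin (n + k) × Fin (n + k) with p.1 < p.2, (x p.1 - x p.2)) *
        (∏ p : Fin n × Fin n with p.1 < p.2, (y p.1 - y p.2)) *
      ∑ σ : Perm (Fin (n + k)), (Perm.sign σ : F) *
        (det (of fun a a' : Fin n => M (σ (Fin.castAdd k a)) (Fin.castAdd k a')) *
          det (of fun b b' : Fin k => M (σ (Fin.natAdd n b)) (Fin.natAdd n b'))) := by
        simp only [Fintype.sum_prod_type, mul_sum, ← htop, ← hbot, prod_filter_lt_sub_comp_perm,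
          div_eq_mul_inv, ← prod_inv_distrib]
        refine sum_congr rfl fun σ _ => ?_
        simp only [mul_sum, sum_mul]
        refine sum_congr rfl fun τ _ => ?_
        ring
    _ = _ := by
      rw [sum_sign_mul_det_castAdd_mul_det_natAdd, hM,
        prod_offDiag_eq_prod_filter_lt (fun a b => x a - x b),
        prod_offDiag_eq_prod_filter_lt (fun a b => y a - y b), prod_mul_distrib, prod_mul_distrib,
        det_vandermonde_eq_prod_filter_lt, det_vandermonde_eq_prod_filter_lt]
      ring

end Symmetrization

/-- For integers `m ≥ n ≥ 0`, in the field `ℚ(X_1,…,X_m,X_1^*,…,X_n^*)` one has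
`P_{m,n} = (1/(n!·(m−n)!)) · Σ_{w ∈ 𝔖_m × 𝔖_n} w·S_{m,n}`, where `𝔖_m` permutes the
variables `X_1,…,X_m` and `𝔖_n` permutes `X_1^*,…,X_n^*`. -/
theorem statement0 (hmn : n ≤ m) :
    toRF m n (Pnum m n) / toRF m n (Pden m n) =
      ((n.factorial * (m - n).factorial : ℕ) : RF m n)⁻¹ *
        ∑ w : Perm (Fin m) × Perm (Fin n),
          toRF m n (rename (Sum.map ⇑w.1 ⇑w.2) (Snum m n)) /
            toRF m n (rename (Sum.map ⇑w.1 ⇑w.2) (Sden m n hmn)) := by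
  obtain ⟨k, rfl⟩ := Nat.exists_eq_add_of_le hmn
  let x : Fin (n + k) → RF (n + k) n := fun i => toRF _ _ (X (Sum.inl i))
  let y : Fin n → RF (n + k) n := fun j => toRF _ _ (X (Sum.inr j))
  have hxy : ∀ i j, x i + y j ≠ 0 := fun i j => by
    rw [← map_add, map_ne_zero_iff (toRF _ _) (IsFractionRing.injective _ _)]
    intro h
    simpa using congrArg (eval fun _ => (1 : ℚ)) h
  have hc : ((n.factorial * (n + k - n).factorial : ℕ) : RF (n + k) n) ≠ 0 :=
    Nat.cast_ne_zero.2 (by positivity)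
  rw [eq_inv_mul_iff_mul_eq₀ hc, Nat.add_sub_cancel_left]
  have hcast : ∀ a : Fin n, Fin.castLE hmn a = Fin.castAdd k a := fun _ => rfl
  simpa [Pnum, Pden, Snum, Sden, Xl, Xr, x, y, hcast] using
    (sum_perm_S_eq_factorial_mul_P x y hxy).symm

end Stmt0
end
end

section
/- Let m ≥ n ≥ 0 be integers and let x_1,…,x_m be pairwise distinct purely imaginary complex numbers; set x_k^* = −x_k for 1 ≤ k ≤ n and x = (x_1,…,x_m,x_1^*,…,x_n^*). Then: (a) ∏_{1≤j≤m,1≤k≤n, j≠k}(x_j+x_k^*) ≠ 0 and (∏_{1≤j≠k≤m}(x_j−x_k) · ∏_{1≤j≠k≤n}(x_j^*−x_k^*)) / ∏_{1≤j≤m,1≤k≤n, j≠k}(x_j+x_k^*) = S*_{m,n}(x); (b) for every s ∈ ℂ with Re(s) > 0 all denominators occurring in S_{m,n,s}(x) are nonzero and s^n·S_{m,n,s}(x) = S*_{m,n}(x); (c) for every s ∈ ℂ with Re(s) > 0 all denominators occurring in P_{m,n,s}(x) are nonzero, and s^n·P_{m,n,s}(x) tends to S*_{m,n}(x) as s → 0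 with Re(s) > 0. -/
/-!
Because `x_k^* = -x_k`, every factor `x_j + x_k^*` is a difference `x_j - x_k`, so all the
products involved are products of `x_j - x_k` over sets of ordered pairs `(j, k)`, and (a) is
an identity between these index sets counted with multiplicity, checked pair by pair.
The shift by `s/2` leaves all differences unchanged, while each diagonal factor
`(x_k + s/2) + (x_k^* + s/2)` becomes exactly `s`; this produces the factor `s^n` in (b) and (c),
and (c) then reduces to continuity at `s = 0` of the remaining off-diagonal denominator,
which is nonzero by injectivity.
-/

open Finset Filter Topology

section CommMonoid

variable {M : Type*} [CommMonoid M]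

theorem Fin.offDiag_univ_eq_filter_val_ne (n : ℕ) :
    (univ : Finset (Fin n)).offDiag = univ.filter (fun p : Fin n × Fin n => (p.1 : ℕ) ≠ p.2) := by
  ext p
  simp [Fin.val_ne_iff]

theorem Finset.prod_filter_swap {α : Type*} [Fintype α] (Q : α × α → Prop) [DecidablePred Q]
    (g : α × α → M) :
    ∏ q ∈ univ.filter Q, g q.swap = ∏ q ∈ univ.filter (fun q => Q q.swap), g q :=
  prod_equiv (Equiv.prodComm α α) (by simp) (fun _ _ => rfl)

theorem Fin.prod_filter_castLE_prodMap {n₁ n₂ m : ℕ} (h₁ : n₁ ≤ m) (h₂ : n₂ ≤ m)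
    (P : ℕ → ℕ → Prop) [DecidableRel P] (g : Fin m × Fin m → M) :
    ∏ p ∈ univ.filter (fun p : Fin n₁ × Fin n₂ => P p.1 p.2),
        g (Fin.castLE h₁ p.1, Fin.castLE h₂ p.2) =
      ∏ q ∈ univ.filter (fun q : Fin m × Fin m => (q.1 : ℕ) < n₁ ∧ (q.2 : ℕ) < n₂ ∧ P q.1 q.2),
        g q := by
  refine prod_nbij (fun p => (Fin.castLE h₁ p.1, Fin.castLE h₂ p.2)) ?_ ?_ ?_ fun _ _ => rfl
  · intro p hp
    simp_all
  · intro p _ p' _ h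
    simp_all [Prod.ext_iff]
  · rintro q hq
    simp only [coe_filter, mem_univ, true_and, Set.mem_ofPred_eq] at hq
    exact ⟨(⟨q.1, hq.1⟩, ⟨q.2, hq.2.1⟩), by simpa using hq.2.2, rfl⟩

theorem Fin.prod_prod_eq_pow_mul_prod_filter_val_ne {m n : ℕ} (hmn : n ≤ m)
    (f : Fin m → Fin n → M) (c : M) (hdiag : ∀ k, f (Fin.castLE hmn k) k = c) :
    ∏ j, ∏ k, f j k =
      c ^ n * ∏ p ∈ univ.filter (fun p : Fin m × Fin n => (p.1 : ℕ) ≠ p.2), f p.1 p.2 := by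
  have herase : ∀ k : Fin n,
      univ.erase (Fin.castLE hmn k) = univ.filter (fun j : Fin m => (j : ℕ) ≠ k) := by
    intro k; ext j; simp [Fin.ext_iff]
  calc ∏ j, ∏ k, f j k = ∏ k, (c * ∏ j ∈ univ.erase (Fin.castLE hmn k), f j k) := by
        rw [Finset.prod_comm]
        exact prod_congr rfl fun k _ => by
          rw [← hdiag k, mul_prod_erase _ (f · k) (mem_univ _)]
    _ = c ^ n * ∏ p ∈ univ.filter (fun p : Fin m × Fin n => (p.1 : ℕ) ≠ p.2), f p.1 p.2 := by
        rw [prod_mul_distrib, prod_const, prod_filter, Fintype.prod_prod_type, Finset.prod_comm]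
        simp only [herase, prod_filter]

/-- Both sides contain each pair `(j, k)` with `j ≠ k` once, and a second time if `j, k < n`. -/
theorem Fin.prod_val_ne_mul_prod_initial_val_ne {m : ℕ} (n : ℕ) (f : Fin m × Fin m → M) :
    (∏ q ∈ univ.filter (fun q : Fin m × Fin m => (q.1 : ℕ) ≠ q.2), f q) *
        ∏ q ∈ univ.filter
            (fun q : Fin m × Fin m => (q.2 : ℕ) < n ∧ (q.1 : ℕ) < n ∧ (q.2 : ℕ) ≠ q.1), f q =
      (∏ q ∈ univ.filter (fun q : Fin m × Fin m => (q.2 : ℕ) < n ∧ (q.1 : ℕ) ≠ q.2), f q) *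
        ((∏ q ∈ univ.filter (fun q : Fin m × Fin m => (q.2 : ℕ) < n ∧ (q.1 : ℕ) < n ∧ q.2 < q.1),
            f q) *
          (∏ q ∈ univ.filter (fun q : Fin m × Fin m => q.1 < q.2), f q) *
          ∏ q ∈ univ.filter (fun q : Fin m × Fin m => n ≤ (q.2 : ℕ) ∧ q.2 < q.1), f q) := by
  simp only [prod_filter, ← prod_mul_distrib]
  refine prod_congr rfl fun q _ => ?_
  simp only [Fin.lt_def]
  split_ifs <;> first | (exfalso; omega) | simp [mul_comm]

end CommMonoid

section CommRing

variable {R : Type*} [CommRing R] {m n : ℕ}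

def offDiagProd (x : Fin m → R) : R := ∏ p ∈ univ.offDiag, (x p.1 - x p.2)

/-- `S*_{m,n}` at `(x, x^*) = (x, xs)`; `pmn` and `smn` below are `P_{m,n}` and `S_{m,n}`. -/
def smnStar (x : Fin m → R) (xs : Fin n → R) : R :=
  (∏ pr ∈ univ.filter (fun pr : Fin n × Fin n => pr.1 < pr.2), (xs pr.1 - xs pr.2)) *
    (∏ pr ∈ univ.filter (fun pr : Fin m × Fin m => pr.1 < pr.2), (x pr.1 - x pr.2)) *
    ∏ pr ∈ univ.filter (fun pr : Fin m × Fin m => n ≤ (pr.2 : ℕ) ∧ pr.2 < pr.1), (x pr.1 - x pr.2)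

theorem offDiagProd_add_const (x : Fin m → R) (c : R) :
    offDiagProd (fun j => x j + c) = offDiagProd x := by
  simp only [offDiagProd, add_sub_add_right_eq_sub]

theorem smnStar_add_const (x : Fin m → R) (xs : Fin n → R) (c : R) :
    smnStar (fun j => x j + c) (fun k => xs k + c) = smnStar x xs := by
  simp only [smnStar, add_sub_add_right_eq_sub]

theorem offDiagProd_mul_offDiagProd_eq (hmn : n ≤ m) (x : Fin m → R) (xs : Fin n → R)
    (hxs : ∀ k, xs k = -x (Fin.castLE hmn k)) :
    offDiagProd x * offDiagProd xs =
      (∏ p ∈ univ.filter (fun p : Fin m × Fin n => (p.1 : ℕ) ≠ p.2), (x p.1 + xs p.2)) *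
        smnStar x xs := by
  set d : Fin m × Fin m → R := fun q => x q.1 - x q.2
  have hswap : ∀ a b : Fin n, xs a - xs b = d (Fin.castLE hmn b, Fin.castLE hmn a) := by
    intro a b
    simp only [hxs, d]
    ring
  have hx : offDiagProd x = ∏ q ∈ univ.filter (fun q : Fin m × Fin m => (q.1 : ℕ) ≠ q.2), d q := by
    rw [offDiagProd, Fin.offDiag_univ_eq_filter_val_ne]
  have hxs_ne : offDiagProd xs = ∏ q ∈ univ.filter
      (fun q : Fin m × Fin m => (q.2 : ℕ) < n ∧ (q.1 : ℕ) < n ∧ (q.2 : ℕ) ≠ q.1), d q := by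
    rw [offDiagProd, Fin.offDiag_univ_eq_filter_val_ne, prod_congr rfl fun p _ => hswap p.1 p.2]
    exact (Fin.prod_filter_castLE_prodMap hmn hmn (· ≠ ·) (d ∘ Prod.swap)).trans
      (prod_filter_swap _ d)
  have hxs_lt : ∏ pr ∈ univ.filter (fun pr : Fin n × Fin n => pr.1 < pr.2), (xs pr.1 - xs pr.2) =
      ∏ q ∈ univ.filter
        (fun q : Fin m × Fin m => (q.2 : ℕ) < n ∧ (q.1 : ℕ) < n ∧ q.2 < q.1), d q := by
    rw [prod_congr rfl fun p _ => hswap p.1 p.2]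
    exact (Fin.prod_filter_castLE_prodMap hmn hmn (· < ·) (d ∘ Prod.swap)).trans
      (prod_filter_swap _ d)
  have hden : ∏ p ∈ univ.filter (fun p : Fin m × Fin n => (p.1 : ℕ) ≠ p.2), (x p.1 + xs p.2) =
      ∏ q ∈ univ.filter (fun q : Fin m × Fin m => (q.2 : ℕ) < n ∧ (q.1 : ℕ) ≠ q.2), d q := by
    calc _ = ∏ p ∈ univ.filter (fun p : Fin m × Fin n => (p.1 : ℕ) ≠ p.2),
          d (Fin.castLE le_rfl p.1, Fin.castLE hmn p.2) :=
          prod_congr rfl fun p _ => by simp [d, hxs, sub_eq_add_neg]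
      _ = _ := by
          rw [Fin.prod_filter_castLE_prodMap le_rfl hmn (· ≠ ·) d]
          simp only [Fin.is_lt, true_and]
  rw [hx, hxs_ne, smnStar, hxs_lt, hden]
  exact Fin.prod_val_ne_mul_prod_initial_val_ne n d

end CommRing

section Field

variable {K : Type*} [Field K] {m n : ℕ}

def pmn (x : Fin m → K) (xs : Fin n → K) : K :=
  offDiagProd x * offDiagProd xs / ∏ j, ∏ k, (x j + xs k)

def smn (hmn : n ≤ m) (x : Fin m → K) (xs : Fin n → K) : K :=
  smnStar x xs / ∏ k, (x (Fin.castLE hmn k) + xs k)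

theorem prod_filter_val_ne_add_ne_zero (hmn : n ≤ m) {x : Fin m → K} (hx : Function.Injective x)
    {xs : Fin n → K} (hxs : ∀ k, xs k = -x (Fin.castLE hmn k)) :
    ∏ p ∈ univ.filter (fun p : Fin m × Fin n => (p.1 : ℕ) ≠ p.2), (x p.1 + xs p.2) ≠ 0 := by
  refine prod_ne_zero_iff.2 fun p hp => ?_
  rw [hxs, ← sub_eq_add_neg, sub_ne_zero]
  exact fun h => (mem_filter.1 hp).2 (congrArg Fin.val (hx h))

theorem offDiagProd_mul_div_eq_smnStar (hmn : n ≤ m) {x : Fin m → K} (hx : Function.Injective x)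
    {xs : Fin n → K} (hxs : ∀ k, xs k = -x (Fin.castLE hmn k)) :
    offDiagProd x * offDiagProd xs /
        ∏ p ∈ univ.filter (fun p : Fin m × Fin n => (p.1 : ℕ) ≠ p.2), (x p.1 + xs p.2) =
      smnStar x xs := by
  rw [div_eq_iff (prod_filter_val_ne_add_ne_zero hmn hx hxs),
    offDiagProd_mul_offDiagProd_eq hmn x xs hxs, mul_comm]

variable [NeZero (2 : K)]

theorem add_half_add_add_half_of_eq_neg {a b : K} (hab : b = -a) (s : K) :
    a + s / 2 + (b + s / 2) = s := by
  rw [hab, add_add_add_comm, add_neg_cancel, zero_add, add_halves]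

theorem pow_mul_smn_add_half (hmn : n ≤ m) (x : Fin m → K) {xs : Fin n → K}
    (hxs : ∀ k, xs k = -x (Fin.castLE hmn k)) {s : K} (hs : s ≠ 0) :
    s ^ n * smn hmn (fun j => x j + s / 2) (fun k => xs k + s / 2) = smnStar x xs := by
  rw [smn, smnStar_add_const,
    prod_congr rfl fun k _ => add_half_add_add_half_of_eq_neg (hxs k) s, prod_const, card_univ,
    Fintype.card_fin, mul_div_cancel₀ _ (pow_ne_zero n hs)]

theorem tendsto_pow_mul_pmn_add_half [TopologicalSpace K] [IsTopologicalDivisionRing K]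
    (hmn : n ≤ m) {x : Fin m → K} (hx : Function.Injective x) {xs : Fin n → K}
    (hxs : ∀ k, xs k = -x (Fin.castLE hmn k)) :
    Tendsto (fun s => s ^ n * pmn (fun j => x j + s / 2) (fun k => xs k + s / 2)) (𝓝[≠] 0)
      (𝓝 (smnStar x xs)) := by
  set T := univ.filter (fun p : Fin m × Fin n => (p.1 : ℕ) ≠ p.2)
  have hshift : ∀ s ≠ 0, s ^ n * pmn (fun j => x j + s / 2) (fun k => xs k + s / 2) =
      offDiagProd x * offDiagProd xs / ∏ p ∈ T, (x p.1 + s / 2 + (xs p.2 + s / 2)) := by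
    intro s hs
    rw [pmn, offDiagProd_add_const, offDiagProd_add_const,
      Fin.prod_prod_eq_pow_mul_prod_filter_val_ne hmn _ s
        fun k => add_half_add_add_half_of_eq_neg (hxs k) s,
      ← mul_div_assoc, mul_div_mul_left _ _ (pow_ne_zero n hs)]
  have hden : Tendsto (fun s : K => ∏ p ∈ T, (x p.1 + s / 2 + (xs p.2 + s / 2))) (𝓝 0)
      (𝓝 (∏ p ∈ T, (x p.1 + xs p.2))) := by
    have hcont : Continuous fun s : K => ∏ p ∈ T, (x p.1 + s / 2 + (xs p.2 + s / 2)) := by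
      fun_prop
    simpa using hcont.tendsto 0
  rw [← offDiagProd_mul_div_eq_smnStar hmn hx hxs]
  refine ((tendsto_const_nhds.div hden (prod_filter_val_ne_add_ne_zero hmn hx hxs)).mono_left
    nhdsWithin_le_nhds).congr' ?_
  filter_upwards [self_mem_nhdsWithin] with s hs
  exact (hshift s hs).symm

end Field

theorem Complex.add_half_add_add_half_ne_zero {a b s : ℂ} (ha : a.re = 0) (hb : b.re = 0)
    (hs : 0 < s.re) : a + s / 2 + (b + s / 2) ≠ 0 := by
  intro h
  have := congrArg Complex.re h
  simp only [Complex.add_re, Complex.div_ofNat_re, ha, hb, Complex.zero_re] at this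
  linarith

/-- Let `m ≥ n ≥ 0` and let `x_1,…,x_m` be pairwise distinct purely imaginary complex
numbers; set `x_k^* = −x_k` for `1 ≤ k ≤ n`. Then:
(a) the denominator `∏_{1≤j≤m,1≤k≤n, j≠k}(x_j+x_k^*)` is nonzero and
`P*_{m,n}` evaluated at `x` equals `S*_{m,n}(x)`;
(b) for every `s` with `Re(s) > 0` all denominators of `S_{m,n,s}(x)` are nonzero and
`s^n·S_{m,n,s}(x) = S*_{m,n}(x)`;
(c) for every `s` with `Re(s) > 0` all denominators of `P_{m,n,s}(x)` are nonzero, and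
`s^n·P_{m,n,s}(x) → S*_{m,n}(x)` as `s → 0` with `Re(s) > 0`. -/
theorem statement1 (m n : ℕ) (hmn : n ≤ m) (x : Fin m → ℂ)
    (himg : ∀ j, (x j).re = 0) (hinj : Function.Injective x) :
    let xs : Fin n → ℂ := fun k => -x (Fin.castLE hmn k)
    let Sstar : ℂ :=
      (∏ pr ∈ Finset.filter (fun pr : Fin n × Fin n => pr.1 < pr.2) univ,
          (xs pr.1 - xs pr.2)) *
        (∏ pr ∈ Finset.filter (fun pr : Fin m × Fin m => pr.1 < pr.2) univ,
          (x pr.1 - x pr.2)) *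
        ∏ pr ∈ Finset.filter (fun pr : Fin m × Fin m => n ≤ (pr.2 : ℕ) ∧ pr.2 < pr.1) univ,
          (x pr.1 - x pr.2)
    -- (a)
    ((∏ pr ∈ Finset.filter (fun pr : Fin m × Fin n => (pr.1 : ℕ) ≠ (pr.2 : ℕ)) univ,
          (x pr.1 + xs pr.2)) ≠ 0 ∧
      ((∏ pr ∈ (univ : Finset (Fin m)).offDiag, (x pr.1 - x pr.2)) *
            ∏ pr ∈ (univ : Finset (Fin n)).offDiag, (xs pr.1 - xs pr.2)) /
          (∏ pr ∈ Finset.filter (fun pr : Fin m × Fin n => (pr.1 : ℕ) ≠ (pr.2 : ℕ)) univ,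
            (x pr.1 + xs pr.2)) = Sstar) ∧
    -- (b)
    (∀ s : ℂ, 0 < s.re →
      (∀ k : Fin n, (x (Fin.castLE hmn k) + s / 2) + (xs k + s / 2) ≠ 0) ∧
      s ^ n *
          (((∏ pr ∈ Finset.filter (fun pr : Fin n × Fin n => pr.1 < pr.2) univ,
                ((xs pr.1 + s / 2) - (xs pr.2 + s / 2))) *
              (∏ pr ∈ Finset.filter (fun pr : Fin m × Fin m => pr.1 < pr.2) univ,
                ((x pr.1 + s / 2) - (x pr.2 + s / 2))) *
              ∏ pr ∈ Finset.filter
                  (fun pr : Fin m × Fin m => n ≤ (pr.2 : ℕ) ∧ pr.2 < pr.1) univ,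
                ((x pr.1 + s / 2) - (x pr.2 + s / 2))) /
            ∏ k : Fin n, ((x (Fin.castLE hmn k) + s / 2) + (xs k + s / 2))) = Sstar) ∧
    -- (c)
    (∀ s : ℂ, 0 < s.re → ∀ (j : Fin m) (k : Fin n), (x j + s / 2) + (xs k + s / 2) ≠ 0) ∧
    Tendsto
      (fun s : ℂ =>
        s ^ n *
          (((∏ pr ∈ (univ : Finset (Fin m)).offDiag, ((x pr.1 + s / 2) - (x pr.2 + s / 2))) *
                ∏ pr ∈ (univ : Finset (Fin n)).offDiag, ((xs pr.1 + s / 2) - (xs pr.2 + s / 2))) /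
              ∏ j : Fin m, ∏ k : Fin n, ((x j + s / 2) + (xs k + s / 2))))
      (nhdsWithin 0 {s : ℂ | 0 < s.re}) (nhds Sstar) := by
  intro xs Sstar
  have hxs : ∀ k, xs k = -x (Fin.castLE hmn k) := fun _ => rfl
  have hxs_re : ∀ k, (xs k).re = 0 := fun k => by simp [hxs, himg]
  refine ⟨⟨prod_filter_val_ne_add_ne_zero hmn hinj hxs,
      offDiagProd_mul_div_eq_smnStar hmn hinj hxs⟩,
    fun s hs => ⟨fun k => Complex.add_half_add_add_half_ne_zero (himg _) (hxs_re k) hs,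
      pow_mul_smn_add_half hmn x hxs (Complex.ne_zero_of_re_pos hs)⟩,
    fun s hs j k => Complex.add_half_add_add_half_ne_zero (himg j) (hxs_re k) hs, ?_⟩
  exact (tendsto_pow_mul_pmn_add_half hmn hinj hxs).mono_left
    (nhdsWithin_mono 0 fun s hs => Complex.ne_zero_of_re_pos hs)
end

section
/- Let p ≥ 1 and let y = (y_1,…,y_p) be purely imaginary complex numbers with y_{p+1−k} = −y_k for 1 ≤ k ≤ ⌊p/2⌋, such that y_j ≠ y_k for all j ≠ k and y_j + y_k ≠ 0 for all j < k with k ≠ p+1−j. Then: (a) ∏_{1≤j≠k≤p}(y_j−y_k) / ∏_{1≤j<k≤p, k≠p+1−j}(y_j+y_k) = T*_p(y); (b) for every s ∈ ℂ with Re(s) > 0 all denominators occurring in T_{p,s}(y) are nonzero and s^{⌊p/2⌋}·T_{p,s}(y) = T*_p(y); (c) for every s ∈ ℂ with Re(s) > 0 all denominators occurring in Q_{p,s}(y) are nonzero, and s^{⌊p/2⌋}·Q_{p,s}(y) tends to T*_p(y) as s → 0 with Re(s) > 0. -/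
/-!
Away from the middle index, `y (rev i) = -y i`. Pairing a non-mirror pair `(i, j)` (`i < j`,
`j ≠ rev i`) left of the centre with its mirror image `(rev j, rev i)`, and substituting
`j ↦ rev j`, turns each product of two differences `y_a - y_b` into minus a product of two sums
`y_a + y_b`; so over the non-mirror pairs the differences and the sums agree up to the sign
`(-1)^ε`. The mirror pairs `(i, rev i)` supply the second product in `T*`, and after the shift by
`s/2` each of them contributes exactly `s` to the denominators, which is where `s^⌊p/2⌋` comes
from; the remaining denominator is continuous in `s` and nonzero at `s = 0`.
-/

open Finset Filter

namespace RevPairs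

variable {p : ℕ}

abbrev lowerHalf (p : ℕ) : Finset (Fin p) := {i | (i : ℕ) < p / 2}

abbrev ltPairs (p : ℕ) : Finset (Fin p × Fin p) := {e | e.1 < e.2}

abbrev nonMirrorPairs (p : ℕ) : Finset (Fin p × Fin p) := {e | e.1 < e.2 ∧ e.2 ≠ e.1.rev}

-- The pairs `i < j` with `i + j < p - 1`; `mirror` maps them onto the other non-mirror pairs.
abbrev leftPairs (p : ℕ) : Finset (Fin p × Fin p) := {e | e.1 < e.2 ∧ e.1 < e.2.rev}

def mirror (e : Fin p × Fin p) : Fin p × Fin p := (e.2.rev, e.1.rev)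

lemma lt_half_iff_lt_rev (i : Fin p) : (i : ℕ) < p / 2 ↔ i < i.rev := by
  rw [Fin.lt_def, Fin.val_rev]
  omega

lemma card_lowerHalf : #(lowerHalf p) = p / 2 := by
  rw [Fin.card_filter_val_lt]
  omega

lemma rev_eq_neg_of_ne_rev {R : Type*} [InvolutiveNeg R] {y : Fin p → R}
    (hrev : ∀ i : Fin p, (i : ℕ) < p / 2 → y i.rev = -y i) {i : Fin p} (hi : i ≠ i.rev) :
    y i.rev = -y i := by
  rcases lt_or_gt_of_ne hi with h | h
  · exact hrev i ((lt_half_iff_lt_rev i).2 h)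
  · have := hrev i.rev ((lt_half_iff_lt_rev _).2 (by rwa [Fin.rev_rev]))
    rw [Fin.rev_rev] at this
    rw [this, neg_neg]

section Splitting

variable {M : Type*} [CommMonoid M]

@[to_additive]
lemma prod_offDiag_eq_prod_ltPairs (f : Fin p × Fin p → M) :
    ∏ e ∈ (univ : Finset (Fin p)).offDiag, f e = ∏ e ∈ ltPairs p, f e * f e.swap := by
  rw [← prod_filter_mul_prod_filter_not univ.offDiag (fun e => e.1 < e.2), prod_mul_distrib]
  congr 1
  · refine prod_congr (ext fun e => ?_) fun _ _ => rfl
    simp only [mem_filter, mem_offDiag, mem_univ, true_and]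
    exact ⟨And.right, fun h => ⟨h.ne, h⟩⟩
  · refine prod_equiv (Equiv.prodComm _ _) (fun e => ?_) fun _ _ => rfl
    simp only [mem_filter, mem_offDiag, mem_univ, true_and, Equiv.prodComm_apply, Prod.fst_swap,
      Prod.snd_swap, not_lt]
    exact ⟨fun h => lt_of_le_of_ne h.2 h.1.symm, fun h => ⟨h.ne', h.le⟩⟩

@[to_additive]
lemma prod_ltPairs (f : Fin p × Fin p → M) :
    ∏ e ∈ ltPairs p, f e
      = (∏ i ∈ lowerHalf p, f (i, i.rev)) * ∏ e ∈ nonMirrorPairs p, f e := by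
  rw [← prod_filter_mul_prod_filter_not (ltPairs p) (fun e => e.2 = e.1.rev), filter_filter,
    filter_filter]
  congr 1
  refine prod_nbij' Prod.fst (fun i => (i, i.rev)) ?_ ?_ ?_ (fun _ _ => rfl) ?_
  iterate 3
    intro e
    simp only [mem_filter, mem_univ, true_and, and_true, Prod.ext_iff, Fin.lt_def, Fin.ext_iff,
      Fin.val_rev]
    omega
  rintro ⟨i, j⟩ h
  rw [← (mem_filter.1 h).2.2]

@[to_additive]
lemma prod_nonMirrorPairs (f : Fin p × Fin p → M) :
    ∏ e ∈ nonMirrorPairs p, f e = ∏ e ∈ leftPairs p, f e * f (mirror e) := by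
  rw [← prod_filter_mul_prod_filter_not (nonMirrorPairs p) (fun e => e.1 < e.2.rev),
    prod_mul_distrib, filter_filter, filter_filter]
  congr 1
  · refine prod_congr (filter_congr fun e _ => ?_) fun _ _ => rfl
    simp only [Fin.lt_def, ne_eq, Fin.ext_iff, Fin.val_rev]
    omega
  · refine prod_nbij' mirror mirror ?_ ?_ ?_ ?_ ?_ <;>
      simp only [mirror, mem_filter, mem_univ, true_and, Fin.rev_rev, Prod.mk.eta, implies_true]
    all_goals
      simp only [Fin.lt_def, ne_eq, Fin.ext_iff, Fin.val_rev]
      omega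

lemma prod_leftPairs_comp_rev_snd (f : Fin p × Fin p → M) :
    ∏ e ∈ leftPairs p, f e = ∏ e ∈ leftPairs p, f (e.1, e.2.rev) := by
  refine prod_nbij' (fun e => (e.1, e.2.rev)) (fun e => (e.1, e.2.rev)) ?_ ?_ ?_ ?_ ?_ <;>
    simp only [mem_filter, mem_univ, true_and, Fin.rev_rev, Prod.mk.eta, implies_true]
  all_goals
    simp only [Fin.lt_def, Fin.val_rev]
    omega

end Splitting

lemma card_ltPairs : #(ltPairs p) = p / 2 + #(nonMirrorPairs p) := by
  simpa [card_lowerHalf] using sum_ltPairs (fun _ => (1 : ℕ))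

lemma card_nonMirrorPairs : #(nonMirrorPairs p) = 2 * #(leftPairs p) := by
  simpa [mul_comm] using sum_nonMirrorPairs (p := p) (fun _ => (1 : ℕ))

lemma two_mul_card_ltPairs : 2 * #(ltPairs p) = p * p - p := by
  simpa [mul_comm] using (sum_offDiag_eq_sum_ltPairs (p := p) (fun _ => (1 : ℕ))).symm

lemma card_leftPairs : #(leftPairs p) = (p * (p - 1) / 2 - p / 2) / 2 := by
  have := two_mul_card_ltPairs (p := p)
  have := card_ltPairs (p := p)
  have := card_nonMirrorPairs (p := p)
  rw [Nat.mul_sub_one]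
  omega

section Alternants

variable {R : Type*} [CommRing R] {y : Fin p → R}

-- On a left pair `(i, j)` the index `i` is not the middle one, while `j` may be.
lemma sub_mul_sub_rev_of_mem_leftPairs
    (hrev : ∀ i : Fin p, (i : ℕ) < p / 2 → y i.rev = -y i) {e : Fin p × Fin p}
    (he : e ∈ leftPairs p) :
    (y e.1 - y e.2.rev) * (y e.2 - y e.1.rev) = -((y e.1 + y e.2) * (y e.2.rev + y e.1.rev)) := by
  obtain ⟨i, j⟩ := e
  simp only [mem_filter, mem_univ, true_and] at he
  have hi : i ≠ i.rev := by
    simp only [ne_eq, Fin.ext_iff, Fin.val_rev, Fin.lt_def] at he ⊢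
    omega
  rw [rev_eq_neg_of_ne_rev hrev hi]
  by_cases hj : j = j.rev
  · rw [← hj]
    ring
  · rw [rev_eq_neg_of_ne_rev hrev hj]
    ring

lemma prod_nonMirrorPairs_sub (hrev : ∀ i : Fin p, (i : ℕ) < p / 2 → y i.rev = -y i) :
    ∏ e ∈ nonMirrorPairs p, (y e.1 - y e.2)
      = (-1) ^ #(leftPairs p) * ∏ e ∈ nonMirrorPairs p, (y e.1 + y e.2) := by
  rw [prod_nonMirrorPairs, prod_nonMirrorPairs, prod_leftPairs_comp_rev_snd, pow_card_mul_prod]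
  refine prod_congr rfl fun e he => ?_
  simp only [mirror, Fin.rev_rev]
  rw [sub_mul_sub_rev_of_mem_leftPairs hrev he]
  ring

lemma prod_offDiag_sub (hrev : ∀ i : Fin p, (i : ℕ) < p / 2 → y i.rev = -y i) :
    ∏ e ∈ (univ : Finset (Fin p)).offDiag, (y e.1 - y e.2)
      = (-1) ^ #(leftPairs p) *
          ((∏ e ∈ ltPairs p, (y e.1 - y e.2)) * ∏ i ∈ lowerHalf p, (y i.rev - y i)) *
        ∏ e ∈ nonMirrorPairs p, (y e.1 + y e.2) := by
  set Δ := ∏ e ∈ ltPairs p, (y e.1 - y e.2) with hΔ_def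
  have hsq : ∏ e ∈ (univ : Finset (Fin p)).offDiag, (y e.1 - y e.2)
      = (-1) ^ #(ltPairs p) * Δ ^ 2 := by
    rw [prod_offDiag_eq_prod_ltPairs, hΔ_def, ← prod_pow, pow_card_mul_prod]
    exact prod_congr rfl fun _ _ => by simp only [Prod.fst_swap, Prod.snd_swap]; ring
  have hΔ : Δ = (-1) ^ (p / 2) * (∏ i ∈ lowerHalf p, (y i.rev - y i)) *
      ((-1) ^ #(leftPairs p) * ∏ e ∈ nonMirrorPairs p, (y e.1 + y e.2)) := by
    rw [hΔ_def, prod_ltPairs, prod_nonMirrorPairs_sub hrev, ← card_lowerHalf, pow_card_mul_prod]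
    exact congrArg (· * _) (prod_congr rfl fun _ _ => by ring)
  have hsign : ((-1 : R) ^ #(ltPairs p)) * (-1) ^ (p / 2) = 1 := by
    rw [← pow_add, card_ltPairs, card_nonMirrorPairs,
      show p / 2 + 2 * #(leftPairs p) + p / 2 = 2 * (p / 2 + #(leftPairs p)) by ring, pow_mul,
      neg_one_sq, one_pow]
  rw [hsq]
  linear_combination ((-1) ^ #(ltPairs p) * Δ) * hΔ + ((-1) ^ #(leftPairs p) * Δ *
    (∏ i ∈ lowerHalf p, (y i.rev - y i)) * ∏ e ∈ nonMirrorPairs p, (y e.1 + y e.2)) * hsign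

end Alternants

end RevPairs

open RevPairs in
theorem statement3_general (p : ℕ) (y : Fin p → ℂ)
    (himg : ∀ j, (y j).re = 0)
    (hrev : ∀ i : Fin p, (i : ℕ) < p / 2 → y i.rev = -y i)
    (hden : ∀ i j : Fin p, i < j → j ≠ i.rev → y i + y j ≠ 0) :
    let ε : ℕ := (p * (p - 1) / 2 - p / 2) / 2
    let Tstar : ℂ :=
      (-1) ^ ε *
        ((∏ pr ∈ Finset.filter (fun pr : Fin p × Fin p => pr.1 < pr.2) univ,
            (y pr.1 - y pr.2)) *
          ∏ i ∈ Finset.filter (fun i : Fin p => (i : ℕ) < p / 2) univ, (y i.rev - y i))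
    -- (a)
    ((∏ pr ∈ (univ : Finset (Fin p)).offDiag, (y pr.1 - y pr.2)) /
        (∏ pr ∈ Finset.filter
            (fun pr : Fin p × Fin p => pr.1 < pr.2 ∧ pr.2 ≠ pr.1.rev) univ,
          (y pr.1 + y pr.2)) = Tstar) ∧
    -- (b)
    (∀ s : ℂ, 0 < s.re →
      (∀ i : Fin p, (i : ℕ) < p / 2 → (y i + s / 2) + (y i.rev + s / 2) ≠ 0) ∧
      s ^ (p / 2) *
          ((-1) ^ ε *
            (((∏ pr ∈ Finset.filter (fun pr : Fin p × Fin p => pr.1 < pr.2) univ,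
                  ((y pr.1 + s / 2) - (y pr.2 + s / 2))) *
                ∏ i ∈ Finset.filter (fun i : Fin p => (i : ℕ) < p / 2) univ,
                  ((y i.rev + s / 2) - (y i + s / 2))) /
              ∏ i ∈ Finset.filter (fun i : Fin p => (i : ℕ) < p / 2) univ,
                ((y i + s / 2) + (y i.rev + s / 2)))) = Tstar) ∧
    -- (c)
    (∀ s : ℂ, 0 < s.re →
      ∀ i j : Fin p, i < j → (y i + s / 2) + (y j + s / 2) ≠ 0) ∧
    Tendsto
      (fun s : ℂ =>
        s ^ (p / 2) *
          ((∏ pr ∈ (univ : Finset (Fin p)).offDiag, ((y pr.1 + s / 2) - (y pr.2 + s / 2))) /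
            ∏ pr ∈ Finset.filter (fun pr : Fin p × Fin p => pr.1 < pr.2) univ,
              ((y pr.1 + s / 2) + (y pr.2 + s / 2))))
      (nhdsWithin 0 {s : ℂ | 0 < s.re}) (nhds Tstar) := by
  intro ε Tstar
  have hε : ε = #(leftPairs p) := card_leftPairs.symm
  have hS : ∏ e ∈ nonMirrorPairs p, (y e.1 + y e.2) ≠ 0 :=
    prod_ne_zero_iff.2 fun e he => hden e.1 e.2 (mem_filter.1 he).2.1 (mem_filter.1 he).2.2
  have hmirror (s : ℂ) (i : Fin p) (hi : i ∈ lowerHalf p) :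
      (y i + s / 2) + (y i.rev + s / 2) = s := by
    rw [hrev i (mem_filter.1 hi).2]
    ring
  have ha : (∏ e ∈ (univ : Finset (Fin p)).offDiag, (y e.1 - y e.2)) /
      ∏ e ∈ nonMirrorPairs p, (y e.1 + y e.2) = Tstar := by
    rw [div_eq_iff hS, prod_offDiag_sub hrev, ← hε]
  refine ⟨ha, fun s hs => ⟨fun i hi => ?_, ?_⟩, fun s hs i j _ => ?_, ?_⟩
  · rw [hmirror s i (mem_filter.2 ⟨mem_univ i, hi⟩)]
    exact Complex.ne_zero_of_re_pos hs
  · simp only [add_sub_add_right_eq_sub]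
    rw [prod_congr rfl (hmirror s), prod_const, card_lowerHalf, mul_div_assoc',
      mul_div_cancel₀ _ (pow_ne_zero _ (Complex.ne_zero_of_re_pos hs))]
  · refine ne_of_apply_ne Complex.re ?_
    have hre : ((y i + s / 2) + (y j + s / 2)).re = s.re := by simp [himg]
    rw [hre, Complex.zero_re]
    exact hs.ne'
  · have hcont : ContinuousAt (fun s : ℂ =>
        (∏ e ∈ (univ : Finset (Fin p)).offDiag, (y e.1 - y e.2)) /
          ∏ e ∈ nonMirrorPairs p, ((y e.1 + s / 2) + (y e.2 + s / 2))) 0 := by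
      fun_prop (disch := simp [hS])
    have hlim := hcont.tendsto.mono_left (nhdsWithin_le_nhds (s := {s : ℂ | 0 < s.re}))
    simp only [zero_div, add_zero, ha] at hlim
    refine hlim.congr' (eventually_mem_nhdsWithin.mono fun s hs => ?_)
    simp only [add_sub_add_right_eq_sub]
    rw [prod_ltPairs, prod_congr rfl (hmirror s), prod_const, card_lowerHalf, ← mul_div_assoc,
      mul_div_mul_left _ _ (pow_ne_zero _ (Complex.ne_zero_of_re_pos hs))]

/-- Let `p ≥ 1` and let `y_1,…,y_p` be purely imaginary complex numbers with
`y_{p+1−k} = −y_k` for `1 ≤ k ≤ ⌊p/2⌋` (in 0-based indexing the partner of `i` is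
`Fin.rev i = p−1−i`), pairwise distinct and with `y_j + y_k ≠ 0` for all `j < k` with
`k ≠ p+1−j`. Then:
(a) `∏_{j≠k}(y_j−y_k) / ∏_{j<k, k≠p+1−j}(y_j+y_k) = T*_p(y)`;
(b) for every `s` with `Re(s) > 0` all denominators of `T_{p,s}(y)` are nonzero and
`s^{⌊p/2⌋}·T_{p,s}(y) = T*_p(y)`;
(c) for every `s` with `Re(s) > 0` all denominators of `Q_{p,s}(y)` are nonzero, and
`s^{⌊p/2⌋}·Q_{p,s}(y) → T*_p(y)` as `s → 0` with `Re(s) > 0`. -/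
theorem statement3 (p : ℕ) (hp : 1 ≤ p) (y : Fin p → ℂ)
    (himg : ∀ j, (y j).re = 0)
    (hrev : ∀ i : Fin p, (i : ℕ) < p / 2 → y i.rev = -y i)
    (hinj : Function.Injective y)
    (hden : ∀ i j : Fin p, i < j → j ≠ i.rev → y i + y j ≠ 0) :
    let ε : ℕ := (p * (p - 1) / 2 - p / 2) / 2
    let Tstar : ℂ :=
      (-1) ^ ε *
        ((∏ pr ∈ Finset.filter (fun pr : Fin p × Fin p => pr.1 < pr.2) univ,
            (y pr.1 - y pr.2)) *
          ∏ i ∈ Finset.filter (fun i : Fin p => (i : ℕ) < p / 2) univ, (y i.rev - y i))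
    -- (a)
    ((∏ pr ∈ (univ : Finset (Fin p)).offDiag, (y pr.1 - y pr.2)) /
        (∏ pr ∈ Finset.filter
            (fun pr : Fin p × Fin p => pr.1 < pr.2 ∧ pr.2 ≠ pr.1.rev) univ,
          (y pr.1 + y pr.2)) = Tstar) ∧
    -- (b)
    (∀ s : ℂ, 0 < s.re →
      (∀ i : Fin p, (i : ℕ) < p / 2 → (y i + s / 2) + (y i.rev + s / 2) ≠ 0) ∧
      s ^ (p / 2) *
          ((-1) ^ ε *
            (((∏ pr ∈ Finset.filter (fun pr : Fin p × Fin p => pr.1 < pr.2) univ,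
                  ((y pr.1 + s / 2) - (y pr.2 + s / 2))) *
                ∏ i ∈ Finset.filter (fun i : Fin p => (i : ℕ) < p / 2) univ,
                  ((y i.rev + s / 2) - (y i + s / 2))) /
              ∏ i ∈ Finset.filter (fun i : Fin p => (i : ℕ) < p / 2) univ,
                ((y i + s / 2) + (y i.rev + s / 2)))) = Tstar) ∧
    -- (c)
    (∀ s : ℂ, 0 < s.re →
      ∀ i j : Fin p, i < j → (y i + s / 2) + (y j + s / 2) ≠ 0) ∧
    Tendsto
      (fun s : ℂ =>
        s ^ (p / 2) *
          ((∏ pr ∈ (univ : Finset (Fin p)).offDiag, ((y pr.1 + s / 2) - (y pr.2 + s / 2))) /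
            ∏ pr ∈ Finset.filter (fun pr : Fin p × Fin p => pr.1 < pr.2) univ,
              ((y pr.1 + s / 2) + (y pr.2 + s / 2))))
      (nhdsWithin 0 {s : ℂ | 0 < s.re}) (nhds Tstar) :=
  statement3_general p y himg hrev hden
end

section
/- Let n ≥ 1 and let R be a commutative ring. Let J ∈ M_{n+1}(R) be the matrix with J_{a,a+1} = 1 for 1 ≤ a ≤ n and all other entries 0, and let 𝔫'_{n+1}(R) = {Y ∈ M_{n+1}(R) : Y_{ab} = 0 whenever b ≤ a+1}. For an upper unitriangular matrix u ∈ M_n(R) (that is, u_{aa} = 1 for all a and u_{ab} = 0 for a > b), let ũ ∈ GL_{n+1}(R) denote the block-diagonal matrix diag(u,1). Then the map u ↦ ũ·J·ũ^{−1} is a bijection from the group of upper unitriangular n×n matrices over R onto the set J + 𝔫'_{n+1}(R). -/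
noncomputable section

namespace Stmt11

variable (n : ℕ) (R : Type*) [CommRing R]

/-- The matrix `J ∈ M_{n+1}(R)` with `J_{a,a+1} = 1` for `1 ≤ a ≤ n` (1-based) and all other
entries `0`, i.e. ones exactly on the superdiagonal. -/
def J : Matrix (Fin (n + 1)) (Fin (n + 1)) R :=
  Matrix.of fun a b => if (b : ℕ) = (a : ℕ) + 1 then 1 else 0

/-- The block-diagonal embedding `u ↦ ũ = diag(u, 1)` of `M_n(R)` into `M_{n+1}(R)`. -/
def emb (u : Matrix (Fin n) (Fin n) R) : Matrix (Fin (n + 1)) (Fin (n + 1)) R :=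
  Matrix.of fun i j =>
    if hi : (i : ℕ) < n then
      if hj : (j : ℕ) < n then u ⟨i, hi⟩ ⟨j, hj⟩ else 0
    else if (j : ℕ) < n then 0 else 1

/-!
If `ũ J ũ⁻¹ = Y` then `ũ J = Y ũ`: `Y` sends column `b` of `ũ` to column `b - 1`, and the last
column of `ũ` is the last basis vector `e`. So column `b` of `ũ` is `Y ^ (n - b) e`, i.e. `ũ` is
the Krylov matrix of `Y`, which gives injectivity. Conversely, for `Y = J + Z` with `Z ∈ 𝔫'`, `Y`
is nilpotent and `Y ^ k` agrees with `J ^ k` up to the `(k + 1)`-st superdiagonal, so the Krylov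
matrix of `Y` is unitriangular of the form `diag(u, 1)` and conjugates `J` to `Y`. Finally
`ũ J ũ⁻¹ - J = ((ũ - 1) J - J (ũ - 1)) ũ⁻¹` lies in `𝔫'`.
-/

section Band

variable {m : ℕ} {S : Type*}

/-- `IsUpperFrom 0`, `IsUpperFrom 1`, `IsUpperFrom 2` are the upper triangular, strictly upper
triangular and `𝔫'` matrices. -/
def IsUpperFrom [Zero S] (k : ℕ) (X : Matrix (Fin m) (Fin m) S) : Prop :=
  ∀ a b : Fin m, (b : ℕ) < a + k → X a b = 0

namespace IsUpperFrom

variable {X Y : Matrix (Fin m) (Fin m) S} {j k : ℕ}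

lemma mono [Zero S] (h : j ≤ k) (hX : IsUpperFrom k X) : IsUpperFrom j X :=
  fun a b hb => hX a b (by omega)

lemma of_isUpperTriangular [Zero S] (hX : X.IsUpperTriangular) : IsUpperFrom 0 X :=
  fun _ _ h => hX (Fin.lt_def.mpr h)

lemma add [AddZeroClass S] (hX : IsUpperFrom k X) (hY : IsUpperFrom k Y) :
    IsUpperFrom k (X + Y) := fun a b h => by
  rw [Matrix.add_apply, hX a b h, hY a b h, add_zero]

lemma sub [SubNegZeroMonoid S] (hX : IsUpperFrom k X) (hY : IsUpperFrom k Y) :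
    IsUpperFrom k (X - Y) := fun a b h => by
  rw [Matrix.sub_apply, hX a b h, hY a b h, sub_zero]

lemma mul [NonUnitalNonAssocSemiring S] (hX : IsUpperFrom j X) (hY : IsUpperFrom k Y) :
    IsUpperFrom (j + k) (X * Y) := fun a b h => by
  rw [Matrix.mul_apply]
  refine Finset.sum_eq_zero fun c _ => ?_
  by_cases hc : (c : ℕ) < a + j
  · rw [hX a c hc, zero_mul]
  · rw [hY c b (by omega), mul_zero]

lemma pow [Semiring S] (hX : IsUpperFrom j X) (k : ℕ) : IsUpperFrom (j * k) (X ^ k) := by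
  induction k with
  | zero => exact of_isUpperTriangular Matrix.blockTriangular_one
  | succ k ih => rw [pow_succ]; exact ih.mul hX

lemma eq_zero [Zero S] (hX : IsUpperFrom m X) : X = 0 := by
  ext a b
  exact hX a b (by omega)

lemma pow_eq_zero [Semiring S] (hX : IsUpperFrom 1 X) : X ^ m = 0 :=
  eq_zero (by simpa using hX.pow m)

lemma pow_add_sub_pow [Ring S] {A Z : Matrix (Fin m) (Fin m) S} (hA : IsUpperFrom 1 A)
    (hZ : IsUpperFrom 2 Z) (k : ℕ) : IsUpperFrom (k + 1) ((A + Z) ^ k - A ^ k) := by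
  induction k with
  | zero => rw [pow_zero, pow_zero, sub_self]; exact fun _ _ _ => rfl
  | succ k ih =>
    have hAZ : IsUpperFrom k ((A + Z) ^ k) := by
      simpa using (hA.add (hZ.mono (by omega))).pow k
    have expand :
        (A + Z) ^ (k + 1) - A ^ (k + 1) = A * ((A + Z) ^ k - A ^ k) + Z * (A + Z) ^ k := by
      rw [pow_succ', pow_succ', add_mul, mul_sub]
      abel
    rw [expand]
    exact ((hA.mul ih).mono (by omega)).add ((hZ.mul hAZ).mono (by omega))

end IsUpperFrom

end Band

section Unitriangular

variable {m : ℕ} {S : Type*} [CommRing S] {X : Matrix (Fin m) (Fin m) S}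

lemma isUpperFrom_sub_one (hX : X.IsUpperTriangular) (hdiag : ∀ i, X i i = 1) :
    IsUpperFrom 1 (X - 1) := fun a b h => by
  rcases (Nat.lt_succ_iff_lt_or_eq.mp h) with h | h
  · rw [Matrix.sub_apply, hX (Fin.lt_def.mpr h), Matrix.one_apply_ne (by omega), sub_zero]
  · rw [Fin.ext h, Matrix.sub_apply, hdiag, Matrix.one_apply_eq, sub_self]

lemma isUnit_det_of_unitriangular (hX : X.IsUpperTriangular) (hdiag : ∀ i, X i i = 1) :
    IsUnit X.det := by
  simp [Matrix.det_of_isUpperTriangular hX, hdiag]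

lemma IsUpperFrom.conj_sub {A : Matrix (Fin m) (Fin m) S} (hA : IsUpperFrom 1 A)
    (hX : X.IsUpperTriangular) (hdiag : ∀ i, X i i = 1) :
    IsUpperFrom 2 (X * A * X⁻¹ - A) := by
  have hdet := isUnit_det_of_unitriangular hX hdiag
  have : Invertible X := X.invertibleOfIsUnitDet hdet
  have hinv : IsUpperFrom 0 X⁻¹ :=
    .of_isUpperTriangular (Matrix.blockTriangular_inv_of_blockTriangular hX)
  have hN := isUpperFrom_sub_one hX hdiag
  have expand : X * A * X⁻¹ - A = ((X - 1) * A - A * (X - 1)) * X⁻¹ :=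
    calc X * A * X⁻¹ - A = X * A * X⁻¹ - A * (X * X⁻¹) := by
          rw [Matrix.mul_nonsing_inv X hdet, mul_one]
      _ = ((X - 1) * A - A * (X - 1)) * X⁻¹ := by noncomm_ring
  rw [expand]
  exact ((hN.mul hA).sub (hA.mul hN)).mul hinv

end Unitriangular

section Shift

variable {m : ℕ} {S : Type*} [CommRing S]

lemma J_apply (a b : Fin (m + 1)) : J m S a b = if (b : ℕ) = a + 1 then 1 else 0 := rfl

lemma isUpperFrom_J : IsUpperFrom 1 (J m S) := fun a b h => by
  rw [J_apply, if_neg (by omega)]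

lemma mul_J_apply_zero (X : Matrix (Fin (m + 1)) (Fin (m + 1)) S) (i : Fin (m + 1)) :
    (X * J m S) i 0 = 0 := by
  rw [Matrix.mul_apply]
  exact Finset.sum_eq_zero fun c _ => by rw [J_apply, if_neg (by simp), mul_zero]

lemma mul_J_apply_succ (X : Matrix (Fin (m + 1)) (Fin (m + 1)) S) (i : Fin (m + 1)) (j : Fin m) :
    (X * J m S) i j.succ = X i j.castSucc := by
  rw [Matrix.mul_apply, Finset.sum_eq_single j.castSucc, J_apply, if_pos (by simp), mul_one]
  · intro c _ hc
    rw [J_apply, if_neg (fun h => hc (Fin.ext (by simp at h ⊢; omega))), mul_zero]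
  · simp

lemma J_pow_apply (k : ℕ) (a b : Fin (m + 1)) :
    (J m S ^ k) a b = if (b : ℕ) = a + k then 1 else 0 := by
  induction k generalizing b with
  | zero => simp [Matrix.one_apply, Fin.ext_iff, eq_comm]
  | succ k ih =>
    rw [pow_succ]
    cases b using Fin.cases with
    | zero => rw [mul_J_apply_zero, if_neg (by simp)]
    | succ b => rw [mul_J_apply_succ, ih]; simp [← Nat.add_assoc]

end Shift

section BlockDiagonal

variable {m : ℕ} {S : Type*} [CommRing S] {u : Matrix (Fin m) (Fin m) S}

@[simp]
lemma emb_apply_castSucc_castSucc (i j : Fin m) :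
    emb m S u i.castSucc j.castSucc = u i j := by
  simp [emb]

@[simp]
lemma emb_apply_castSucc_last (i : Fin m) :
    emb m S u i.castSucc (Fin.last m) = 0 := by
  simp [emb]

@[simp]
lemma emb_apply_last_castSucc (j : Fin m) :
    emb m S u (Fin.last m) j.castSucc = 0 := by
  simp [emb]

@[simp]
lemma emb_apply_last_last :
    emb m S u (Fin.last m) (Fin.last m) = 1 := by
  simp [emb]

lemma emb_apply_col_last (i : Fin (m + 1)) :
    emb m S u i (Fin.last m) = (1 : Matrix (Fin (m + 1)) (Fin (m + 1)) S) i (Fin.last m) := by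
  cases i using Fin.lastCases <;> simp [Fin.castSucc_ne_last]

lemma emb_injective : Function.Injective (emb m S) := fun u v h => by
  ext i j
  simpa using congrFun (congrFun h i.castSucc) j.castSucc

lemma emb_isUpperTriangular (hu : u.IsUpperTriangular) : (emb m S u).IsUpperTriangular := by
  intro i j hji
  cases i using Fin.lastCases with
  | last => cases j using Fin.lastCases <;> simp_all
  | cast i =>
    cases j using Fin.lastCases with
    | last => exact absurd hji (not_lt.mpr (Fin.le_last _))
    | cast j => simpa using hu (by simpa using hji)

lemma emb_apply_self (hdiag : ∀ i, u i i = 1) (i : Fin (m + 1)) : emb m S u i i = 1 := by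
  cases i using Fin.lastCases <;> simp [hdiag]

lemma eq_emb_submatrix {X : Matrix (Fin (m + 1)) (Fin (m + 1)) S}
    (hrow : ∀ j, X (Fin.last m) j = (1 : Matrix (Fin (m + 1)) (Fin (m + 1)) S) (Fin.last m) j)
    (hcol : ∀ i, X i (Fin.last m) = (1 : Matrix (Fin (m + 1)) (Fin (m + 1)) S) i (Fin.last m)) :
    X = emb m S (X.submatrix Fin.castSucc Fin.castSucc) := by
  ext i j
  cases j using Fin.lastCases with
  | last => rw [hcol, emb_apply_col_last]
  | cast j =>
    cases i using Fin.lastCases with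
    | last => rw [hrow]; simp [(Fin.castSucc_ne_last j).symm]
    | cast i => simp

end BlockDiagonal

section Krylov

variable {m : ℕ} {S : Type*} [CommRing S]

def krylovMatrix (Y : Matrix (Fin (m + 1)) (Fin (m + 1)) S) :
    Matrix (Fin (m + 1)) (Fin (m + 1)) S :=
  Matrix.of fun i b => (Y ^ (m - b)) i (Fin.last m)

lemma krylovMatrix_apply (Y : Matrix (Fin (m + 1)) (Fin (m + 1)) S) (i b : Fin (m + 1)) :
    krylovMatrix Y i b = (Y ^ (m - b)) i (Fin.last m) := rfl

lemma mul_krylovMatrix_apply (Y : Matrix (Fin (m + 1)) (Fin (m + 1)) S) (i b : Fin (m + 1)) :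
    (Y * krylovMatrix Y) i b = (Y ^ (m - b + 1)) i (Fin.last m) := by
  rw [pow_succ', Matrix.mul_apply, Matrix.mul_apply]
  rfl

lemma eq_krylovMatrix_of_mul_J {X Y : Matrix (Fin (m + 1)) (Fin (m + 1)) S}
    (hXY : X * J m S = Y * X)
    (hlast : ∀ i, X i (Fin.last m) = (1 : Matrix (Fin (m + 1)) (Fin (m + 1)) S) i (Fin.last m)) :
    X = krylovMatrix Y := by
  have key :
      ∀ k (b : Fin (m + 1)), (b : ℕ) + k = m → ∀ i, X i b = (Y ^ k) i (Fin.last m) := by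
    intro k
    induction k with
    | zero => intro b hb i; rw [show b = Fin.last m from Fin.ext hb, hlast, pow_zero]
    | succ k ih =>
      intro b hb i
      obtain ⟨c, rfl⟩ : ∃ c : Fin m, c.castSucc = b := ⟨⟨b, by omega⟩, rfl⟩
      rw [← mul_J_apply_succ X, hXY, pow_succ', Matrix.mul_apply, Matrix.mul_apply]
      exact Finset.sum_congr rfl fun l _ => by rw [ih c.succ (by simp at hb ⊢; omega) l]
  ext i b
  exact key (m - b) b (by omega) i

lemma krylovMatrix_mul_J {Y : Matrix (Fin (m + 1)) (Fin (m + 1)) S} (hY : Y ^ (m + 1) = 0) :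
    krylovMatrix Y * J m S = Y * krylovMatrix Y := by
  ext i b
  rw [mul_krylovMatrix_apply]
  cases b using Fin.cases with
  | zero => rw [mul_J_apply_zero, Fin.val_zero, Nat.sub_zero, hY, Matrix.zero_apply]
  | succ b =>
    rw [mul_J_apply_succ, krylovMatrix_apply, show m - (b.castSucc : ℕ) = m - b.succ + 1 by
      simp only [Fin.val_castSucc, Fin.val_succ]; omega]

lemma krylovMatrix_apply_of_le {Z : Matrix (Fin (m + 1)) (Fin (m + 1)) S} (hZ : IsUpperFrom 2 Z)
    {i b : Fin (m + 1)} (h : b ≤ i) :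
    krylovMatrix (J m S + Z) i b = (1 : Matrix (Fin (m + 1)) (Fin (m + 1)) S) i b := by
  have hpow := isUpperFrom_J.pow_add_sub_pow hZ (m - b) i (Fin.last m) (by simp; omega)
  rw [Matrix.sub_apply, sub_eq_zero] at hpow
  rw [krylovMatrix_apply, hpow, J_pow_apply, Matrix.one_apply]
  simp only [Fin.val_last, Fin.ext_iff]
  exact if_congr (by omega) rfl rfl

end Krylov

section Conjugation

variable {m : ℕ} {S : Type*} [CommRing S]

lemma emb_eq_krylovMatrix {u : Matrix (Fin m) (Fin m) S} (hu : u.IsUpperTriangular)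
    (hdiag : ∀ i, u i i = 1) :
    emb m S u = krylovMatrix (emb m S u * J m S * (emb m S u)⁻¹) := by
  refine eq_krylovMatrix_of_mul_J ?_ emb_apply_col_last
  rw [mul_assoc _ _ (emb m S u), Matrix.nonsing_inv_mul _
    (isUnit_det_of_unitriangular (emb_isUpperTriangular hu) (emb_apply_self hdiag)), mul_one]

lemma exists_emb_eq_krylovMatrix {Z : Matrix (Fin (m + 1)) (Fin (m + 1)) S}
    (hZ : IsUpperFrom 2 Z) :
    ∃ u : Matrix (Fin m) (Fin m) S, (∀ i, u i i = 1) ∧ u.IsUpperTriangular ∧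
      emb m S u = krylovMatrix (J m S + Z) := by
  refine ⟨(krylovMatrix (J m S + Z)).submatrix Fin.castSucc Fin.castSucc, fun a => ?_,
    fun a b hba => ?_,
    (eq_emb_submatrix (fun j => krylovMatrix_apply_of_le hZ (Fin.le_last j)) ?_).symm⟩
  · exact (krylovMatrix_apply_of_le hZ le_rfl).trans (Matrix.one_apply_eq _)
  · exact (krylovMatrix_apply_of_le hZ (Fin.castSucc_le_castSucc_iff.mpr hba.le)).trans
      (Matrix.one_apply_ne (by simpa using hba.ne'))
  · simp [krylovMatrix_apply]

end Conjugation

theorem statement11 :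
    Set.BijOn (fun u : Matrix (Fin n) (Fin n) R => emb n R u * J n R * (emb n R u)⁻¹)
      {u | (∀ a, u a a = 1) ∧ ∀ a b : Fin n, b < a → u a b = 0}
      {Y | ∃ Z : Matrix (Fin (n + 1)) (Fin (n + 1)) R,
        (∀ a b : Fin (n + 1), (b : ℕ) ≤ (a : ℕ) + 1 → Z a b = 0) ∧ Y = J n R + Z} := by
  refine ⟨fun u ⟨hdiag, hu⟩ => ?_, fun u ⟨hudiag, hu⟩ v ⟨hvdiag, hv⟩ huv => ?_, ?_⟩
  · have hZ := isUpperFrom_J.conj_sub (emb_isUpperTriangular hu) (emb_apply_self hdiag)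
    exact ⟨_, fun a b hab => hZ a b (by omega), (add_sub_cancel _ _).symm⟩
  · apply emb_injective
    rw [emb_eq_krylovMatrix hu hudiag, emb_eq_krylovMatrix hv hvdiag]
    exact congrArg krylovMatrix huv
  · rintro _ ⟨Z, hZ, rfl⟩
    have hZ2 : IsUpperFrom 2 Z := fun a b h => hZ a b (by omega)
    obtain ⟨u, hdiag, hu, hK⟩ := exists_emb_eq_krylovMatrix hZ2
    have hdet := isUnit_det_of_unitriangular (emb_isUpperTriangular hu) (emb_apply_self hdiag)
    have hnil : (J n R + Z) ^ (n + 1) = 0 :=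
      (isUpperFrom_J.add (hZ2.mono one_le_two)).pow_eq_zero
    refine ⟨u, ⟨hdiag, hu⟩, ?_⟩
    dsimp only
    rw [hK, krylovMatrix_mul_J hnil, mul_assoc, ← hK, Matrix.mul_nonsing_inv _ hdet, mul_one]

end Stmt11
end
end

section
/- Let n ≥ 1, let R be a commutative ring, and let e_1,…,e_{n+1} denote the standard basis row vectors of R^{n+1}. Let Y ∈ M_{n+1}(R) be such that the determinant of the (n+1)×(n+1) matrix whose rows are e_{n+1}, e_{n+1}·Y, e_{n+1}·Y², …, e_{n+1}·Y^n is a unit of R. Let J^− ∈ M_{n+1}(R) be the matrix with (J^−)_{a+1,a} = 1 for 1 ≤ a ≤ n and all other entries 0, and let 𝔟_{n+1}(R) be the set of upper triangular matrices in M_{n+1}(R). Then there exists h ∈ GL_n(R) such that, setting h̃ = diag(h,1) ∈ GL_{n+1}(R), one has h̃^{−1}·Y·h̃ ∈ J^− + 𝔟_{n+1}(R). -/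
noncomputable section

namespace Stmt12

variable (n : ℕ) (R : Type*) [CommRing R]

/-- The matrix `J⁻ ∈ M_{n+1}(R)` with `(J⁻)_{a+1,a} = 1` for `1 ≤ a ≤ n` (1-based) and all
other entries `0`, i.e. ones exactly on the subdiagonal. -/
def Jminus : Matrix (Fin (n + 1)) (Fin (n + 1)) R :=
  Matrix.of fun a b => if (a : ℕ) = (b : ℕ) + 1 then 1 else 0

/-- The block-diagonal embedding `h ↦ h̃ = diag(h, 1)` of `M_n(R)` into `M_{n+1}(R)`. -/
def emb (h : Matrix (Fin n) (Fin n) R) : Matrix (Fin (n + 1)) (Fin (n + 1)) R :=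
  Matrix.of fun i j =>
    if hi : (i : ℕ) < n then
      if hj : (j : ℕ) < n then h ⟨i, hi⟩ ⟨j, hj⟩ else 0
    else if (j : ℕ) < n then 0 else 1


/-! The rows `K_i = e_{n+1} Y^{n-i}` (`i = 0, …, n`) form an invertible matrix with
`K_i Y = K_{i-1}` and `K_n = e_{n+1}`. Deleting the last coordinate of `K_0, …, K_{n-1}` gives
`G = diag(M, 1)`, which is still invertible, and `G_i Y - G_{i-1}` is a multiple of `e_{n+1}` plus,
for `i < n`, a multiple of `e_{n+1} Y = K_{n-1}`; both lie in the span of `G_i, …, G_n`. That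
congruence says exactly that `G Y G⁻¹` agrees with `J⁻` strictly below the diagonal, and
`G = h̃⁻¹` for `h = M⁻¹`. -/

open Matrix Submodule

section RowSpan

variable {ι R : Type*} [Fintype ι] [DecidableEq ι] [CommRing R]

theorem vecMul_apply_eq_zero_of_mem_span {G H : Matrix ι ι R} (hGH : G * H = 1) {s : Set ι}
    {x : ι → R} (hx : x ∈ span R (G '' s)) {j : ι} (hj : j ∉ s) : (x ᵥ* H) j = 0 := by
  induction hx using Submodule.span_induction with
  | mem _ hy =>
    obtain ⟨l, hl, rfl⟩ := hy
    rw [← mul_apply_eq_vecMul, hGH, one_apply_ne]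
    rintro rfl
    exact hj hl
  | zero => simp
  | add _ _ _ _ hx hy => simp [add_vecMul, hx, hy]
  | smul _ _ _ hx => simp [smul_vecMul, hx]

end RowSpan

variable {n R}

theorem conj_apply_eq_Jminus_of_mem_span {G H Y : Matrix (Fin (n + 1)) (Fin (n + 1)) R}
    (hGH : G * H = 1)
    (hG : ∀ i : Fin n, G i.succ ᵥ* Y - G i.castSucc ∈ span R (G '' Set.Ici i.succ))
    {i j : Fin (n + 1)} (hji : j < i) : (G * Y * H) i j = Jminus n R i j := by
  obtain ⟨a, rfl⟩ := Fin.exists_succ_eq.mpr (Fin.ne_zero_of_lt hji)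
  have hj : j ∉ Set.Ici a.succ := fun h => (lt_of_lt_of_le hji h).false
  calc (G * Y * H) a.succ j
      = ((G a.succ ᵥ* Y - G a.castSucc) ᵥ* H) j + (G a.castSucc ᵥ* H) j := by
        rw [sub_vecMul, Pi.sub_apply, sub_add_cancel]; rfl
    _ = (1 : Matrix (Fin (n + 1)) (Fin (n + 1)) R) a.castSucc j := by
        rw [vecMul_apply_eq_zero_of_mem_span hGH (hG a) hj, zero_add, ← mul_apply_eq_vecMul, hGH]
    _ = Jminus n R a.succ j := by
        simp [one_apply, Jminus, Fin.ext_iff, eq_comm]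

@[simp]
theorem emb_castSucc_castSucc (h : Matrix (Fin n) (Fin n) R) (a b : Fin n) :
    emb n R h a.castSucc b.castSucc = h a b := by
  simp [emb]

@[simp]
theorem emb_castSucc_last (h : Matrix (Fin n) (Fin n) R) (a : Fin n) :
    emb n R h a.castSucc (Fin.last n) = 0 := by
  simp [emb]

@[simp]
theorem emb_last_castSucc (h : Matrix (Fin n) (Fin n) R) (b : Fin n) :
    emb n R h (Fin.last n) b.castSucc = 0 := by
  simp [emb]

@[simp]
theorem emb_last_last (h : Matrix (Fin n) (Fin n) R) : emb n R h (Fin.last n) (Fin.last n) = 1 := by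
  simp [emb]

theorem emb_last (h : Matrix (Fin n) (Fin n) R) :
    emb n R h (Fin.last n) = Pi.single (Fin.last n) 1 := by
  ext j
  induction j using Fin.lastCases <;> simp [(Fin.castSucc_lt_last _).ne]

theorem emb_one : emb n R (1 : Matrix (Fin n) (Fin n) R) = 1 := by
  ext i j
  induction i using Fin.lastCases <;> induction j using Fin.lastCases <;>
    simp [one_apply, (Fin.castSucc_lt_last _).ne, (Fin.castSucc_lt_last _).ne']

theorem emb_mul (A B : Matrix (Fin n) (Fin n) R) : emb n R (A * B) = emb n R A * emb n R B := by
  ext i j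
  induction i using Fin.lastCases <;> induction j using Fin.lastCases <;>
    simp [mul_apply, Fin.sum_univ_castSucc]

section Krylov

variable (Y : Matrix (Fin (n + 1)) (Fin (n + 1)) R)

def revKrylov : Matrix (Fin (n + 1)) (Fin (n + 1)) R :=
  of fun i j => (Y ^ (n - (i : ℕ))) (Fin.last n) j

def krylovBlock : Matrix (Fin n) (Fin n) R :=
  (revKrylov Y).submatrix Fin.castSucc Fin.castSucc

theorem revKrylov_last : revKrylov Y (Fin.last n) = Pi.single (Fin.last n) 1 := by
  ext j
  simp [revKrylov, one_apply, Pi.single_apply, eq_comm]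

theorem vecMul_revKrylov_succ (i : Fin n) : revKrylov Y i.succ ᵥ* Y = revKrylov Y i.castSucc := by
  have hexp : n - ((i : ℕ) + 1) + 1 = n - i := by omega
  change (Y ^ (n - ((i : ℕ) + 1))) (Fin.last n) ᵥ* Y = (Y ^ (n - (i : ℕ))) (Fin.last n)
  rw [← mul_apply_eq_vecMul, ← pow_succ, hexp]

theorem isUnit_det_revKrylov
    (hY : IsUnit (of fun k j : Fin (n + 1) => (Y ^ (k : ℕ)) (Fin.last n) j).det) :
    IsUnit (revKrylov Y).det := by
  have hrev : revKrylov Y =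
      (of fun k j : Fin (n + 1) => (Y ^ (k : ℕ)) (Fin.last n) j).submatrix Fin.revPerm id := by
    ext i j
    simp [revKrylov, Fin.val_rev]
  rw [hrev, det_permute]
  exact (Units.isUnit _).map (Int.castRingHom R) |>.mul hY

theorem det_krylovBlock : (krylovBlock Y).det = (revKrylov Y).det := by
  rw [det_succ_row _ (Fin.last n), Fintype.sum_eq_single (Fin.last n)]
  · simp [krylovBlock, revKrylov_last]
  · intro j hj
    simp [revKrylov_last, hj]

theorem emb_krylovBlock_sub_revKrylov_mem_span (l : Fin (n + 1)) :
    emb n R (krylovBlock Y) l - revKrylov Y l ∈ R ∙ Pi.single (Fin.last n) 1 := by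
  refine mem_span_singleton.mpr
    ⟨emb n R (krylovBlock Y) l (Fin.last n) - revKrylov Y l (Fin.last n), ?_⟩
  ext j
  induction l using Fin.lastCases <;> induction j using Fin.lastCases <;>
    simp [krylovBlock, revKrylov_last, (Fin.castSucc_lt_last _).ne]

end Krylov

theorem succ_vecMul_sub_castSucc_mem_span {G Y : Matrix (Fin (n + 1)) (Fin (n + 1)) R}
    (hG_last : G (Fin.last n) = Pi.single (Fin.last n) 1)
    (hG : ∀ l, G l - revKrylov Y l ∈ R ∙ Pi.single (Fin.last n) 1) (i : Fin n) :
    G i.succ ᵥ* Y - G i.castSucc ∈ span R (G '' Set.Ici i.succ) := by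
  have he : Pi.single (Fin.last n) 1 ∈ span R (G '' Set.Ici i.succ) :=
    subset_span ⟨Fin.last n, Fin.le_last _, hG_last⟩
  have hle : R ∙ Pi.single (Fin.last n) 1 ≤ span R (G '' Set.Ici i.succ) :=
    (span_singleton_le_iff_mem _ _).mpr he
  obtain ⟨c, hc⟩ := mem_span_singleton.mp (hG i.succ)
  have hsplit : G i.succ ᵥ* Y - G i.castSucc =
      c • (Pi.single (Fin.last n) 1 ᵥ* Y) - (G i.castSucc - revKrylov Y i.castSucc) := by
    rw [← smul_vecMul, hc, sub_vecMul, vecMul_revKrylov_succ]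
    abel
  rw [hsplit]
  refine sub_mem ?_ (hle (hG _))
  obtain ⟨a, ha⟩ | hlast := Fin.eq_castSucc_or_eq_last i.succ
  · -- `e_{n+1} Y` is row `n - 1` of `revKrylov Y`, and `n - 1 ≥ i + 1` because `i + 1 < n`.
    have hn : 0 < n := i.pos
    let p : Fin n := ⟨n - 1, by omega⟩
    have hp : p.succ = Fin.last n := Fin.ext (by simp [p]; omega)
    have hKp : revKrylov Y p.castSucc ∈ span R (G '' Set.Ici i.succ) := by
      have hpi : p.castSucc ∈ Set.Ici i.succ := by
        rw [Set.mem_Ici, ha, Fin.castSucc_le_castSucc_iff]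
        exact Fin.mk_le_mk.mpr (Nat.le_sub_one_of_lt a.isLt)
      rw [← sub_sub_cancel (G p.castSucc) (revKrylov Y p.castSucc)]
      exact sub_mem (subset_span ⟨_, hpi, rfl⟩) (hle (hG _))
    rw [← revKrylov_last, ← hp, vecMul_revKrylov_succ]
    exact smul_mem _ _ hKp
  · have hc0 : c • Pi.single (Fin.last n) (1 : R) = 0 := by
      rw [hc, hlast, hG_last, revKrylov_last, sub_self]
    rw [← smul_vecMul, hc0, zero_vecMul]
    exact zero_mem _

variable (n R) in
theorem statement12 (Y : Matrix (Fin (n + 1)) (Fin (n + 1)) R)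
    (hY : IsUnit (Matrix.of fun k j : Fin (n + 1) => (Y ^ (k : ℕ)) (Fin.last n) j).det) :
    ∃ h : Matrix (Fin n) (Fin n) R, IsUnit h.det ∧
      ∃ Z : Matrix (Fin (n + 1)) (Fin (n + 1)) R,
        (∀ i j : Fin (n + 1), j < i → Z i j = 0) ∧
        (emb n R h)⁻¹ * Y * emb n R h = Jminus n R + Z := by
  set M := krylovBlock Y
  have hM : IsUnit M.det := det_krylovBlock Y ▸ isUnit_det_revKrylov Y hY
  have hinv : emb n R M * emb n R M⁻¹ = 1 := by rw [← emb_mul, mul_nonsing_inv _ hM, emb_one]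
  refine ⟨M⁻¹, isUnit_nonsing_inv_det _ hM, _, fun i j hji => ?_, (add_sub_cancel _ _).symm⟩
  rw [inv_eq_left_inv hinv, Matrix.sub_apply, sub_eq_zero]
  exact conj_apply_eq_Jminus_of_mem_span hinv
    (succ_vecMul_sub_castSucc_mem_span (emb_last M) (emb_krylovBlock_sub_revKrylov_mem_span Y)) hji

end Stmt12
end
end

section
/- Let n ≥ 1 and let R be a commutative ring. Let J^− ∈ M_{n+1}(R) be the matrix with (J^−)_{a+1,a} = 1 for 1 ≤ a ≤ n and all other entries 0, and let 𝔟_{n+1}(R) be the set of upper triangular matrices in M_{n+1}(R). Let B ∈ J^− + 𝔟_{n+1}(R) and let h ∈ GL_n(R) be such that, with h̃ = diag(h,1) ∈ GL_{n+1}(R), one has h̃·B·h̃^{−1} ∈ J^− + 𝔟_{n+1}(R). Then h is upper unitriangular, i.e. h_{aa} = 1 for all a and h_{ab} = 0 for a > b. -/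
/-!
For `X ∈ J⁻ + 𝔟`, right multiplication by `X` moves the leading `1` of a row vector one column
to the left, so the last rows of `X ^ n, …, X ^ 0` form an upper unitriangular matrix `K(X)`.
As `h̃` has last row `eₙ₊₁`, the relation `C h̃ = h̃ B` for `C = h̃ B h̃⁻¹` gives `K(C) h̃ = K(B)`.
Upper unitriangular matrices form a group, so `h̃`, and with it `h`, is upper unitriangular.
-/

noncomputable section

namespace Stmt13

variable (n : ℕ) (R : Type*) [CommRing R]

/-- The matrix `J⁻ ∈ M_{n+1}(R)` with `(J⁻)_{a+1,a} = 1` for `1 ≤ a ≤ n` (1-based) and all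
other entries `0`, i.e. ones exactly on the subdiagonal. -/
def Jminus : Matrix (Fin (n + 1)) (Fin (n + 1)) R :=
  Matrix.of fun a b => if (a : ℕ) = (b : ℕ) + 1 then 1 else 0

/-- The block-diagonal embedding `h ↦ h̃ = diag(h, 1)` of `M_n(R)` into `M_{n+1}(R)`. -/
def emb (h : Matrix (Fin n) (Fin n) R) : Matrix (Fin (n + 1)) (Fin (n + 1)) R :=
  Matrix.of fun i j =>
    if hi : (i : ℕ) < n then
      if hj : (j : ℕ) < n then h ⟨i, hi⟩ ⟨j, hj⟩ else 0
    else if (j : ℕ) < n then 0 else 1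

variable {n R}

def IsUpperUnitriangular {ι α : Type*} [LT ι] [Zero α] [One α] (M : Matrix ι ι α) : Prop :=
  (∀ i, M i i = 1) ∧ M.IsUpperTriangular

theorem _root_.Matrix.IsUpperTriangular.mul_apply_self {ι : Type*} [Fintype ι] [LinearOrder ι]
    {A B : Matrix ι ι R} (hA : A.IsUpperTriangular) (hB : B.IsUpperTriangular) (i : ι) :
    (A * B) i i = A i i * B i i := by
  rw [Matrix.mul_apply, Finset.sum_eq_single i]
  · intro k _ hki
    rcases hki.lt_or_gt with hlt | hgt
    · rw [hA hlt, zero_mul]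
    · rw [hB hgt, mul_zero]
  · simp

namespace IsUpperUnitriangular

variable {ι : Type*} [Fintype ι] [LinearOrder ι] {P Q : Matrix ι ι R}

theorem mul (hP : IsUpperUnitriangular P) (hQ : IsUpperUnitriangular Q) :
    IsUpperUnitriangular (P * Q) :=
  ⟨fun i => by rw [hP.2.mul_apply_self hQ.2, hP.1, hQ.1, one_mul], hP.2.mul hQ.2⟩

theorem det_eq_one [DecidableEq ι] (hP : IsUpperUnitriangular P) : P.det = 1 := by
  simp [Matrix.det_of_isUpperTriangular hP.2, hP.1]

theorem inv [DecidableEq ι] (hP : IsUpperUnitriangular P) : IsUpperUnitriangular P⁻¹ := by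
  have hdet : IsUnit P.det := hP.det_eq_one ▸ isUnit_one
  have := P.invertibleOfIsUnitDet hdet
  have htri : P⁻¹.IsUpperTriangular := Matrix.blockTriangular_inv_of_blockTriangular hP.2
  refine ⟨fun i => ?_, htri⟩
  have := htri.mul_apply_self hP.2 i
  rwa [Matrix.nonsing_inv_mul _ hdet, Matrix.one_apply_eq, hP.1, mul_one, eq_comm] at this

theorem of_mul_left [DecidableEq ι] {H : Matrix ι ι R} (hP : IsUpperUnitriangular P)
    (hPH : IsUpperUnitriangular (P * H)) : IsUpperUnitriangular H := by
  have hdet : IsUnit P.det := hP.det_eq_one ▸ isUnit_one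
  simpa [← Matrix.mul_assoc, Matrix.nonsing_inv_mul _ hdet] using hP.inv.mul hPH

end IsUpperUnitriangular

theorem mul_jminus_add_apply_castSucc {m : Type*} {Z : Matrix (Fin (n + 1)) (Fin (n + 1)) R}
    (hZ : Z.IsUpperTriangular) (A : Matrix m (Fin (n + 1)) R) (r : m) (j : Fin n)
    (hA : ∀ i ≤ j.castSucc, A r i = 0) :
    (A * (Jminus n R + Z)) r j.castSucc = A r j.succ := by
  have hJ : (A * Jminus n R) r j.castSucc = A r j.succ := by
    rw [Matrix.mul_apply, Finset.sum_eq_single j.succ] <;> simp +contextual [Jminus, Fin.ext_iff]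
  have hAZ : (A * Z) r j.castSucc = 0 := by
    rw [Matrix.mul_apply]
    refine Finset.sum_eq_zero fun i _ => ?_
    rcases le_or_gt i j.castSucc with hle | hlt
    · rw [hA i hle, zero_mul]
    · rw [show Z i j.castSucc = 0 from hZ hlt, mul_zero]
  rw [Matrix.mul_add, Matrix.add_apply, hJ, hAZ, add_zero]

def lastRowPowers (X : Matrix (Fin (n + 1)) (Fin (n + 1)) R) :
    Matrix (Fin (n + 1)) (Fin (n + 1)) R :=
  Matrix.of fun i j => (X ^ (n - i)) (Fin.last n) j

theorem lastRowPowers_isUpperUnitriangular {Z : Matrix (Fin (n + 1)) (Fin (n + 1)) R}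
    (hZ : Z.IsUpperTriangular) : IsUpperUnitriangular (lastRowPowers (Jminus n R + Z)) := by
  set X := Jminus n R + Z
  suffices key : ∀ i : Fin (n + 1),
      (∀ j < i, (X ^ (n - i)) (Fin.last n) j = 0) ∧ (X ^ (n - i)) (Fin.last n) i = 1 from
    ⟨fun i => (key i).2, fun i j hji => (key i).1 j hji⟩
  intro i
  induction i using Fin.reverseInduction with
  | last => exact ⟨fun j hj => by simp [hj.ne'], by simp⟩
  | cast i ih =>
    have hstep : ∀ j : Fin n, j ≤ i →
        (X ^ (n - i.castSucc)) (Fin.last n) j.castSucc = (X ^ (n - i.succ)) (Fin.last n) j.succ := by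
      intro j hj
      rw [show n - i.castSucc = n - i.succ + 1 by simp; omega, pow_succ]
      exact mul_jminus_add_apply_castSucc hZ _ _ j fun l hl =>
        ih.1 l (hl.trans_lt (Fin.castSucc_lt_succ_iff.mpr hj))
    refine ⟨fun j hj => ?_, by rw [hstep i le_rfl, ih.2]⟩
    obtain ⟨j, rfl⟩ := Fin.exists_castSucc_eq.mpr (hj.trans (Fin.castSucc_lt_last i)).ne
    rw [hstep j (Fin.castSucc_lt_castSucc_iff.mp hj).le,
      ih.1 _ (Fin.succ_lt_succ_iff.mpr (Fin.castSucc_lt_castSucc_iff.mp hj))]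

section emb

variable (h : Matrix (Fin n) (Fin n) R)

@[simp]
theorem emb_castSucc_castSucc (i j : Fin n) : emb n R h i.castSucc j.castSucc = h i j := by
  simp [emb]

@[simp]
theorem emb_last_castSucc (j : Fin n) : emb n R h (Fin.last n) j.castSucc = 0 := by
  simp [emb]

@[simp]
theorem emb_last_last : emb n R h (Fin.last n) (Fin.last n) = 1 := by
  simp [emb]

theorem det_emb : (emb n R h).det = h.det := by
  rw [Matrix.det_succ_row _ (Fin.last n), Fin.sum_univ_castSucc]
  have hsub : (emb n R h).submatrix Fin.castSucc Fin.castSucc = h := by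
    ext i j
    simp
  simp [Fin.succAbove_last, hsub, Even.neg_one_pow ⟨n, rfl⟩]

theorem emb_mul_apply_last (N : Matrix (Fin (n + 1)) (Fin (n + 1)) R) (j : Fin (n + 1)) :
    (emb n R h * N) (Fin.last n) j = N (Fin.last n) j := by
  simp [Matrix.mul_apply, Fin.sum_univ_castSucc]

theorem lastRowPowers_mul_emb {B C : Matrix (Fin (n + 1)) (Fin (n + 1)) R}
    (hCB : C * emb n R h = emb n R h * B) : lastRowPowers C * emb n R h = lastRowPowers B := by
  ext i j
  have hpow : C ^ (n - i) * emb n R h = emb n R h * B ^ (n - i) :=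
    ((SemiconjBy.pow_right hCB.symm (n - i)).eq).symm
  change (C ^ (n - i) * emb n R h) (Fin.last n) j = _
  rw [hpow, emb_mul_apply_last]
  rfl

theorem IsUpperUnitriangular.of_emb (hh : IsUpperUnitriangular (emb n R h)) :
    IsUpperUnitriangular h :=
  ⟨fun i => by simpa using hh.1 i.castSucc,
    fun i j hji => by
      simpa using (hh.2 (Fin.castSucc_lt_castSucc_iff.mpr hji) : emb n R h i.castSucc j.castSucc = 0)⟩

end emb

theorem statement13_general (B : Matrix (Fin (n + 1)) (Fin (n + 1)) R)
    (hB : ∃ Z : Matrix (Fin (n + 1)) (Fin (n + 1)) R,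
      (∀ i j : Fin (n + 1), j < i → Z i j = 0) ∧ B = Jminus n R + Z)
    (h : Matrix (Fin n) (Fin n) R) (hdet : IsUnit h.det)
    (hconj : ∃ Z : Matrix (Fin (n + 1)) (Fin (n + 1)) R,
      (∀ i j : Fin (n + 1), j < i → Z i j = 0) ∧
      emb n R h * B * (emb n R h)⁻¹ = Jminus n R + Z) :
    (∀ a, h a a = 1) ∧ ∀ a b : Fin n, b < a → h a b = 0 := by
  obtain ⟨Z, hZ, rfl⟩ := hB
  obtain ⟨Z', hZ', hC⟩ := hconj
  have hemb : IsUnit (emb n R h).det := by rwa [det_emb]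
  have hCB : (Jminus n R + Z') * emb n R h = emb n R h * (Jminus n R + Z) := by
    rw [← hC, Matrix.mul_assoc, Matrix.nonsing_inv_mul _ hemb, Matrix.mul_one]
  have hK : IsUpperUnitriangular (lastRowPowers (Jminus n R + Z') * emb n R h) :=
    lastRowPowers_mul_emb h hCB ▸ lastRowPowers_isUpperUnitriangular hZ
  exact ((lastRowPowers_isUpperUnitriangular hZ').of_mul_left hK).of_emb

/-- If `B ∈ J⁻ + 𝔟_{n+1}(R)` and `h ∈ GL_n(R)` is such that `h̃·B·h̃⁻¹ ∈ J⁻ + 𝔟_{n+1}(R)`,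
then `h` is upper unitriangular. -/
theorem statement13 (hn : 1 ≤ n) (B : Matrix (Fin (n + 1)) (Fin (n + 1)) R)
    (hB : ∃ Z : Matrix (Fin (n + 1)) (Fin (n + 1)) R,
      (∀ i j : Fin (n + 1), j < i → Z i j = 0) ∧ B = Jminus n R + Z)
    (h : Matrix (Fin n) (Fin n) R) (hdet : IsUnit h.det)
    (hconj : ∃ Z : Matrix (Fin (n + 1)) (Fin (n + 1)) R,
      (∀ i j : Fin (n + 1), j < i → Z i j = 0) ∧
      emb n R h * B * (emb n R h)⁻¹ = Jminus n R + Z) :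
    (∀ a, h a a = 1) ∧ ∀ a b : Fin n, b < a → h a b = 0 :=
  statement13_general B hB h hdet hconj

end Stmt13
end
end
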